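/- arXiv:1309.1935 — 5 statements merged into one kernel-verified Lean document; each statement's English description precedes it below -/
import Mathlib

section
/- Let (V, 𝒜) be a measurable space, θ a probability measure on V, and f : V → ℝ a bounded measurable function. Then −log ∫_V e^{−f} dθ = inf_{γ ∈ 𝒫(V)} { R(γ‖θ) + ∫_V f dγ }, where the infimum is taken over all probability measures γ on (V, 𝒜). -/
open MeasureTheory Classical

noncomputable def relEntropy {V : Type*} [MeasurableSpace V] (γ θ : Measure V) : EReal :=
  if γ ≪ θ ∧ Integrable (llr γ θ) γ then ((∫ x, llr γ θ x ∂γ : ℝ) : EReal) else ⊤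

/-!
Tilt `θ` by `-f`, i.e. let `θ_f = e^{-f} θ / Z` with `Z = ∫ e^{-f} dθ`. For every `γ ≪ θ`, the chain
rule for log-likelihood ratios gives `R(γ‖θ) + ∫ f dγ = R(γ‖θ_f) - log Z`, and Gibbs' inequality
`R(γ‖θ_f) ≥ 0` bounds the right-hand side below by `-log Z`. Equality holds at `γ = θ_f`.
-/

open Real

namespace MeasureTheory

variable {V : Type*} [MeasurableSpace V]

lemma integral_llr_nonneg {μ ν : Measure V} [IsProbabilityMeasure μ] [IsProbabilityMeasure ν]
    (hμν : μ ≪ ν) (h_int : Integrable (llr μ ν) μ) :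
    0 ≤ ∫ x, llr μ ν x ∂μ := by
  simpa using InformationTheory.integral_llr_add_sub_measure_univ_nonneg hμν h_int

lemma llr_tilted_self_ae_eq {θ : Measure V} [SigmaFinite θ] {g : V → ℝ}
    (hg : Integrable (fun x ↦ exp (g x)) θ) :
    llr (θ.tilted g) θ =ᵐ[θ.tilted g] fun x ↦ g x - log (∫ x, exp (g x) ∂θ) :=
  (tilted_absolutelyContinuous θ g).ae_le (log_rnDeriv_tilted_left_self hg)

variable {θ : Measure V} [SigmaFinite θ] [NeZero θ] {f : V → ℝ}

lemma neg_log_integral_exp_neg_le_integral_llr_add_integral {γ : Measure V}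
    [IsProbabilityMeasure γ] (hγθ : γ ≪ θ) (h_llr : Integrable (llr γ θ) γ)
    (hfγ : Integrable f γ) (hfθ : Integrable (fun x ↦ exp (-f x)) θ) :
    -log (∫ x, exp (-f x) ∂θ) ≤ ∫ x, llr γ θ x ∂γ + ∫ x, f x ∂γ := by
  have := isProbabilityMeasure_tilted hfθ
  have h_gibbs := integral_llr_nonneg (hγθ.trans (absolutelyContinuous_tilted hfθ))
    (integrable_llr_tilted_right hγθ hfγ.neg h_llr hfθ)
  rw [integral_llr_tilted_right (f := fun x ↦ -f x) hγθ hfγ.neg hfθ h_llr, integral_neg] at h_gibbs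
  linarith

lemma neg_log_integral_exp_neg_le_relEntropy_add_integral {γ : Measure V}
    [IsProbabilityMeasure γ] (hfγ : Integrable f γ) (hfθ : Integrable (fun x ↦ exp (-f x)) θ) :
    ((-log (∫ x, exp (-f x) ∂θ) : ℝ) : EReal) ≤ relEntropy γ θ + ((∫ x, f x ∂γ : ℝ) : EReal) := by
  rw [relEntropy]
  split_ifs with hγθ
  · exact_mod_cast neg_log_integral_exp_neg_le_integral_llr_add_integral hγθ.1 hγθ.2 hfγ hfθ
  · simp

lemma relEntropy_tilted_neg_add_integral (hfθ : Integrable (fun x ↦ exp (-f x)) θ)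
    (hf : Integrable f (θ.tilted fun x ↦ -f x)) :
    relEntropy (θ.tilted fun x ↦ -f x) θ + ((∫ x, f x ∂θ.tilted fun x ↦ -f x : ℝ) : EReal) =
      ((-log (∫ x, exp (-f x) ∂θ) : ℝ) : EReal) := by
  have := isProbabilityMeasure_tilted hfθ
  have h_llr := llr_tilted_self_ae_eq hfθ
  have h_int : Integrable (llr (θ.tilted fun x ↦ -f x) θ) (θ.tilted fun x ↦ -f x) :=
    (integrable_congr h_llr).2 (hf.neg.sub (integrable_const _))
  rw [relEntropy, if_pos ⟨tilted_absolutelyContinuous θ _, h_int⟩, ← EReal.coe_add]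
  congr 1
  rw [integral_congr_ae h_llr, integral_sub (f := fun x ↦ -f x) hf.neg (integrable_const _),
    integral_neg, integral_const, probReal_univ, smul_eq_mul, one_mul]
  ring

end MeasureTheory

/-- Variational representation of exponential integrals:
`−log ∫ e^{−f} dθ = inf_{γ ∈ 𝒫(V)} { R(γ‖θ) + ∫ f dγ }`. -/
theorem neg_log_integral_exp_neg_eq_iInf_relEntropy_add_integral
    {V : Type*} [MeasurableSpace V] (θ : Measure V) [IsProbabilityMeasure θ]
    (f : V → ℝ) (hf : Measurable f) (hbdd : ∃ Cb : ℝ, ∀ x, |f x| ≤ Cb) :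
    ((-Real.log (∫ x, Real.exp (-f x) ∂θ) : ℝ) : EReal) =
      ⨅ (γ : Measure V) (_ : IsProbabilityMeasure γ),
        relEntropy γ θ + ((∫ x, f x ∂γ : ℝ) : EReal) := by
  obtain ⟨C, hC⟩ := hbdd
  have hf_int (γ : Measure V) [IsFiniteMeasure γ] : Integrable f γ :=
    .of_bound hf.aestronglyMeasurable C (ae_of_all _ hC)
  have hexp_int : Integrable (fun x ↦ exp (-f x)) θ :=
    .of_bound hf.neg.exp.aestronglyMeasurable (exp C) <| ae_of_all _ fun x ↦ by
      simpa using (neg_le_abs (f x)).trans (hC x)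
  have := isProbabilityMeasure_tilted hexp_int
  refine le_antisymm
    (le_iInf₂ fun γ _ ↦ neg_log_integral_exp_neg_le_relEntropy_add_integral (hf_int γ) hexp_int) ?_
  rw [← relEntropy_tilted_neg_add_integral hexp_int (hf_int _)]
  exact iInf₂_le _ this
end

section
/- Fix N ∈ ℕ and let g_n, g ∈ S^N be such that for every continuous compactly supported function φ : X_T → ℝ one has ∫_{X_T} φ(t,v) g_n(t,v) ν_T(dt,dv) → ∫_{X_T} φ(t,v) g(t,v) ν_T(dt,dv) as n → ∞. Let h : X_T → ℝ be measurable with ∫_{X_T} |h(t,v)|² ν_T(dt,dv) < ∞ and such that for every δ > 0 and every Borel set E ⊆ X_T with ν_T(E) < ∞ one has ∫_E e^{δ |h(t,v)|} ν_T(dt,dv) < ∞. Then ∫_{X_T} h(t,v) (g_n(t,v) − 1) ν_T(dt,dv) → ∫_{X_T} h(t,v) (g(t,v) − 1) ν_T(dt,dv) as n → ∞. -/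
/-!
Write `ℓ(y) = y log y - y + 1` and `ψ(x) = eˣ - 1 - x`. Young's inequality
`x (y - 1) ≤ ℓ(y) + ψ(x)` gives `∫ |f| |g - 1| ≤ a⁻¹ (L_T(g) + ∫ ψ(a |f|))` for every
`a > 0`, uniformly over `g ∈ S^N`. The hypotheses on `h` make `∫ ψ(a |h|)` finite: `ψ(x) ≤ x²`
where `a |h| ≤ 1`, and `ψ(x) ≤ eˣ` on the set where `a |h| > 1`, which has finite measure
since `h ∈ L²`. Truncating `h` to `{1/k ≤ |h| ≤ k}` and approximating the truncation in `L¹`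
by a clamped continuous compactly supported `φ` then makes `∫ ψ(a |h - φ|)` arbitrarily small,
because `ψ` is Lipschitz on bounded sets and `ψ(x + y) ≤ ψ(2x) + ψ(2y)`. Hence
`g ↦ ∫ h (g - 1)` is, uniformly on `S^N`, a limit of the functionals
`g ↦ ∫ φ (g - 1) = ∫ φ g - ∫ φ`, which converge along `gₙ` by hypothesis.
-/

open MeasureTheory Real Filter Set Topology
open scoped ENNReal

/-- `L_T(g) = ∫_{X_T} (g log g − g + 1) dν_T` (with the convention `0 log 0 = 0`). -/
noncomputable def costLT {X : Type*} [MeasurableSpace X] (νT : Measure (ℝ × X))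
    (g : ℝ × X → ℝ) : ℝ≥0∞ :=
  ∫⁻ p, ENNReal.ofReal (g p * Real.log (g p) - g p + 1) ∂νT

/-- `S^N`: the measurable functions `g : X_T → [0,∞)` with `L_T(g) ≤ N`. -/
def SN {X : Type*} [MeasurableSpace X] (νT : Measure (ℝ × X)) (N : ℕ) :
    Set (ℝ × X → ℝ) :=
  {g | Measurable g ∧ (∀ p, 0 ≤ g p) ∧ costLT νT g ≤ (N : ℝ≥0∞)}

noncomputable def expTail (x : ℝ) : ℝ := exp x - 1 - x

@[fun_prop]
lemma continuous_expTail : Continuous expTail := by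
  unfold expTail
  fun_prop

lemma expTail_nonneg (x : ℝ) : 0 ≤ expTail x := by
  unfold expTail; linarith [add_one_le_exp x]

lemma expTail_zero : expTail 0 = 0 := by simp [expTail]

lemma expTail_le_expTail {x y : ℝ} (hx : 0 ≤ x) (hxy : x ≤ y) : expTail x ≤ expTail y := by
  have hexp : exp x * (1 + (y - x)) ≤ exp y := by
    rw [show y = x + (y - x) by ring, exp_add]
    gcongr
    linarith [add_one_le_exp (y - x)]
  unfold expTail
  nlinarith [one_le_exp hx]

lemma expTail_add_le (x y : ℝ) : expTail (x + y) ≤ expTail (2 * x) + expTail (2 * y) := by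
  have hx := add_one_le_exp (2 * x)
  have hy := add_one_le_exp (2 * y)
  have hsq : exp (2 * x) = exp x ^ 2 := by rw [← exp_nat_mul]; norm_num
  have hsq' : exp (2 * y) = exp y ^ 2 := by rw [← exp_nat_mul]; norm_num
  unfold expTail
  rw [exp_add]
  nlinarith [sq_nonneg (exp x - exp y)]

lemma expTail_mul_abs_sub_le {a : ℝ} (ha : 0 ≤ a) (x y z : ℝ) :
    expTail (a * |x - z|) ≤ expTail (2 * a * |x - y|) + expTail (2 * a * |y - z|) := by
  calc expTail (a * |x - z|) ≤ expTail (a * |x - y| + a * |y - z|) := by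
        rw [← mul_add]
        exact expTail_le_expTail (by positivity)
          (mul_le_mul_of_nonneg_left (abs_sub_le x y z) ha)
    _ ≤ _ := by simpa only [← mul_assoc] using expTail_add_le (a * |x - y|) (a * |y - z|)

lemma expTail_le_expTail_abs (x : ℝ) : expTail x ≤ expTail |x| := by
  rcases le_total 0 x with hx | hx
  · rw [abs_of_nonneg hx]
  · have := self_le_sinh_iff.2 (neg_nonneg.2 hx)
    rw [sinh_eq, neg_neg] at this
    rw [abs_of_nonpos hx]
    unfold expTail
    linarith

lemma expTail_le_sq {x : ℝ} (hx : |x| ≤ 1) : expTail x ≤ x ^ 2 :=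
  (le_abs_self _).trans (abs_exp_sub_one_sub_id_le hx)

lemma expTail_le_exp_mul {x c : ℝ} (hx : 0 ≤ x) (hxc : x ≤ c) : expTail x ≤ exp c * x := by
  have h1 : exp x * (1 - x) ≤ 1 := by
    have := add_one_le_exp (-x)
    calc exp x * (1 - x) ≤ exp x * exp (-x) := by gcongr; linarith
      _ = 1 := by rw [← exp_add]; simp
  have h2 : exp x * x ≤ exp c * x := by gcongr
  unfold expTail
  nlinarith

lemma mul_sub_one_le_add_expTail (x : ℝ) {y : ℝ} (hy : 0 ≤ y) :
    x * (y - 1) ≤ (y * log y - y + 1) + expTail x := by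
  rcases hy.eq_or_lt with rfl | hy
  · simp only [zero_sub, mul_neg, mul_one, Real.log_zero, mul_zero, expTail]
    linarith [exp_pos x]
  · have h := add_one_le_exp (x - log y)
    rw [exp_sub, exp_log hy, le_div_iff₀ hy] at h
    unfold expTail
    nlinarith

lemma abs_mul_abs_sub_one_le (x : ℝ) {y : ℝ} (hy : 0 ≤ y) :
    |x| * |y - 1| ≤ (y * log y - y + 1) + expTail |x| := by
  rw [← abs_mul, abs_le']
  constructor
  · linarith [mul_sub_one_le_add_expTail x hy, expTail_le_expTail_abs x]
  · have := mul_sub_one_le_add_expTail (-x) hy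
    rw [neg_mul] at this
    have h := expTail_le_expTail_abs (-x)
    rw [abs_neg] at h
    linarith

lemma mul_log_sub_add_one_nonneg {y : ℝ} (hy : 0 ≤ y) : 0 ≤ y * log y - y + 1 := by
  linarith [InformationTheory.klFun_nonneg hy, InformationTheory.klFun_apply y]

section

variable {α : Type*}

noncomputable def cutoff (h : α → ℝ) (k : ℕ) : α → ℝ :=
  {p | (k : ℝ)⁻¹ ≤ |h p| ∧ |h p| ≤ k}.indicator h

variable {h : α → ℝ}

lemma abs_cutoff_le (k : ℕ) (p : α) : |cutoff h k p| ≤ k := by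
  rw [cutoff, indicator_apply]
  split_ifs with hp
  exacts [hp.2, by simp]

lemma abs_cutoff_le_mul_sq {k : ℕ} (hk : 0 < k) (p : α) : |cutoff h k p| ≤ k * |h p| ^ 2 := by
  rw [cutoff, indicator_apply]
  split_ifs with hp
  · have hk' : (0 : ℝ) < k := by exact_mod_cast hk
    have : 1 ≤ k * |h p| := by
      simpa [mul_inv_cancel₀ hk'.ne'] using mul_le_mul_of_nonneg_left hp.1 hk'.le
    nlinarith [abs_nonneg (h p)]
  · rw [abs_zero]
    positivity

lemma abs_sub_cutoff_le (k : ℕ) (p : α) : |h p - cutoff h k p| ≤ |h p| := by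
  rw [cutoff, indicator_apply]
  split_ifs <;> simp

lemma eventually_sub_cutoff_eq_zero (p : α) : ∀ᶠ k : ℕ in atTop, h p - cutoff h k p = 0 := by
  by_cases h0 : h p = 0
  · exact Eventually.of_forall fun k => by simp [cutoff, h0]
  filter_upwards [eventually_ge_atTop ⌈max |h p| |h p|⁻¹⌉₊] with k hk
  have hk' : max |h p| |h p|⁻¹ ≤ k := Nat.ceil_le.1 hk
  have hmem : p ∈ {p | (k : ℝ)⁻¹ ≤ |h p| ∧ |h p| ≤ k} :=
    ⟨inv_le_of_inv_le₀ (abs_pos.2 h0) (le_of_max_le_right hk'), le_of_max_le_left hk'⟩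
  simp [cutoff, indicator_of_mem hmem]

end

section

variable {α : Type*} [MeasurableSpace α] {μ : Measure α} {f g h : α → ℝ}

lemma lintegral_enorm_mul_sub_one_le (hgm : Measurable g) (hg0 : ∀ p, 0 ≤ g p)
    {a : ℝ} (ha : 0 < a) :
    ∫⁻ p, ‖f p * (g p - 1)‖ₑ ∂μ ≤ ENNReal.ofReal a⁻¹ *
      (∫⁻ p, ENNReal.ofReal (g p * log (g p) - g p + 1) ∂μ +
        ∫⁻ p, ENNReal.ofReal (expTail (a * |f p|)) ∂μ) := by
  rw [← lintegral_add_left (by fun_prop), ← lintegral_const_mul' _ _ ENNReal.ofReal_ne_top]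
  refine lintegral_mono fun p => ?_
  rw [enorm_eq_ofReal_abs, ← ENNReal.ofReal_add (mul_log_sub_add_one_nonneg (hg0 p))
    (expTail_nonneg _), ← ENNReal.ofReal_mul (inv_nonneg.2 ha.le)]
  refine ENNReal.ofReal_le_ofReal ?_
  have key := abs_mul_abs_sub_one_le (a * f p) (hg0 p)
  rw [abs_mul, abs_of_pos ha, mul_assoc, ← abs_mul] at key
  rwa [le_inv_mul_iff₀ ha]

lemma integrable_mul_sub_one (hfm : Measurable f) (hgm : Measurable g) (hg0 : ∀ p, 0 ≤ g p)
    (hg : ∫⁻ p, ENNReal.ofReal (g p * log (g p) - g p + 1) ∂μ ≠ ∞) {a : ℝ} (ha : 0 < a)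
    (hf : ∫⁻ p, ENNReal.ofReal (expTail (a * |f p|)) ∂μ ≠ ∞) :
    Integrable (fun p => f p * (g p - 1)) μ :=
  ⟨by fun_prop, (lintegral_enorm_mul_sub_one_le hgm hg0 ha).trans_lt
    (ENNReal.mul_lt_top ENNReal.ofReal_lt_top (ENNReal.add_lt_top.2 ⟨hg.lt_top, hf.lt_top⟩))⟩

lemma enorm_integral_mul_sub_one_le (hgm : Measurable g) (hg0 : ∀ p, 0 ≤ g p)
    {a : ℝ} (ha : 0 < a) :
    ‖∫ p, f p * (g p - 1) ∂μ‖ₑ ≤ ENNReal.ofReal a⁻¹ *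
      (∫⁻ p, ENNReal.ofReal (g p * log (g p) - g p + 1) ∂μ +
        ∫⁻ p, ENNReal.ofReal (expTail (a * |f p|)) ∂μ) :=
  (enorm_integral_le_lintegral_enorm _).trans (lintegral_enorm_mul_sub_one_le hgm hg0 ha)

lemma measurable_cutoff (hm : Measurable h) (k : ℕ) : Measurable (cutoff h k) :=
  hm.indicator ((measurableSet_le measurable_const hm.abs).inter
    (measurableSet_le hm.abs measurable_const))

lemma integrable_cutoff (hm : Measurable h) (hsq : ∫⁻ p, ENNReal.ofReal (|h p| ^ 2) ∂μ < ∞)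
    {k : ℕ} (hk : 0 < k) : Integrable (cutoff h k) μ :=
  have hsq_int : Integrable (fun p => |h p| ^ 2) μ :=
    ⟨by fun_prop, (hasFiniteIntegral_iff_ofReal (ae_of_all _ fun p => by positivity)).2 hsq⟩
  (hsq_int.const_mul k).mono' (measurable_cutoff hm k).aestronglyMeasurable
    (ae_of_all _ (abs_cutoff_le_mul_sq hk))

lemma measure_one_lt_mul_abs_lt_top (hm : Measurable h)
    (hsq : ∫⁻ p, ENNReal.ofReal (|h p| ^ 2) ∂μ < ∞) (c : ℝ) :
    μ {p | 1 < c * |h p|} < ∞ := by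
  have hsub : {p | 1 < c * |h p|} ⊆
      {p | 1 ≤ ENNReal.ofReal (c ^ 2) * ENNReal.ofReal (|h p| ^ 2)} := by
    intro p hp
    rw [mem_ofPred_eq, ← ENNReal.ofReal_mul (sq_nonneg c), ← mul_pow, ← ENNReal.ofReal_one]
    exact ENNReal.ofReal_le_ofReal (one_le_pow₀ (le_of_lt hp))
  calc μ {p | 1 < c * |h p|} ≤ _ := measure_mono hsub
    _ ≤ (∫⁻ p, ENNReal.ofReal (c ^ 2) * ENNReal.ofReal (|h p| ^ 2) ∂μ) / 1 :=
        meas_ge_le_lintegral_div (by fun_prop) one_ne_zero ENNReal.one_ne_top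
    _ < ∞ := by
        rw [div_one, lintegral_const_mul _ (by fun_prop)]
        exact ENNReal.mul_lt_top ENNReal.ofReal_lt_top hsq

lemma lintegral_expTail_mul_abs_lt_top (hm : Measurable h)
    (hsq : ∫⁻ p, ENNReal.ofReal (|h p| ^ 2) ∂μ < ∞)
    (hexp : ∀ δ : ℝ, 0 < δ → ∀ E : Set α, MeasurableSet E → μ E < ∞ →
      ∫⁻ p in E, ENNReal.ofReal (exp (δ * |h p|)) ∂μ < ∞)
    {c : ℝ} (hc : 0 < c) :
    ∫⁻ p, ENNReal.ofReal (expTail (c * |h p|)) ∂μ < ∞ := by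
  set E := {p | 1 < c * |h p|}
  have hEm : MeasurableSet E := measurableSet_lt measurable_const (by fun_prop)
  calc ∫⁻ p, ENNReal.ofReal (expTail (c * |h p|)) ∂μ
      ≤ ∫⁻ p, ENNReal.ofReal (c ^ 2) * ENNReal.ofReal (|h p| ^ 2) +
          E.indicator (fun p => ENNReal.ofReal (exp (c * |h p|))) p ∂μ := by
        refine lintegral_mono fun p => ?_
        by_cases hp : p ∈ E
        · rw [indicator_of_mem hp]
          refine le_add_left (ENNReal.ofReal_le_ofReal ?_)
          have : 0 ≤ c * |h p| := by positivity
          unfold expTail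
          linarith
        · rw [indicator_of_notMem hp, add_zero, ← ENNReal.ofReal_mul (sq_nonneg c), ← mul_pow]
          refine ENNReal.ofReal_le_ofReal (expTail_le_sq ?_)
          rw [abs_of_nonneg (by positivity)]
          exact not_lt.1 hp
    _ = ENNReal.ofReal (c ^ 2) * ∫⁻ p, ENNReal.ofReal (|h p| ^ 2) ∂μ +
          ∫⁻ p in E, ENNReal.ofReal (exp (c * |h p|)) ∂μ := by
        rw [lintegral_add_left (by fun_prop), lintegral_const_mul _ (by fun_prop),
          lintegral_indicator hEm]
    _ < ∞ := ENNReal.add_lt_top.2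
        ⟨ENNReal.mul_lt_top ENNReal.ofReal_lt_top hsq,
          hexp c hc E hEm (measure_one_lt_mul_abs_lt_top hm hsq c)⟩

lemma tendsto_lintegral_expTail_sub_cutoff (hm : Measurable h)
    (hsq : ∫⁻ p, ENNReal.ofReal (|h p| ^ 2) ∂μ < ∞)
    (hexp : ∀ δ : ℝ, 0 < δ → ∀ E : Set α, MeasurableSet E → μ E < ∞ →
      ∫⁻ p in E, ENNReal.ofReal (exp (δ * |h p|)) ∂μ < ∞)
    {a : ℝ} (ha : 0 < a) :
    Tendsto (fun k => ∫⁻ p, ENNReal.ofReal (expTail (a * |h p - cutoff h k p|)) ∂μ) atTop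
      (𝓝 0) := by
  rw [← lintegral_zero]
  refine tendsto_lintegral_of_dominated_convergence
    (fun p => ENNReal.ofReal (expTail (a * |h p|))) (fun k => ?_)
    (fun k => ae_of_all _ fun p => ENNReal.ofReal_le_ofReal (expTail_le_expTail
      (by positivity) (mul_le_mul_of_nonneg_left (abs_sub_cutoff_le k p) ha.le)))
    (lintegral_expTail_mul_abs_lt_top hm hsq hexp ha).ne
    (ae_of_all _ fun p => tendsto_const_nhds.congr' ?_)
  · have := measurable_cutoff hm k
    fun_prop
  · filter_upwards [eventually_sub_cutoff_eq_zero (h := h) p] with k hk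
    simp [hk, expTail_zero]

end

section

variable {α : Type*} [TopologicalSpace α] [NormalSpace α] [R1Space α]
  [WeaklyLocallyCompactSpace α] [MeasurableSpace α] [BorelSpace α] {μ : Measure α} [μ.Regular]
  {h : α → ℝ}

lemma MeasureTheory.Integrable.exists_continuous_abs_le_lintegral_sub_le {w : α → ℝ}
    (hw : Integrable w μ) {M : ℝ} (hM0 : 0 ≤ M) (hM : ∀ p, |w p| ≤ M) {δ : ℝ≥0∞}
    (hδ : δ ≠ 0) :
    ∃ φ : α → ℝ, Continuous φ ∧ HasCompactSupport φ ∧ (∀ p, |φ p| ≤ M) ∧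
      ∫⁻ p, ‖w p - φ p‖ₑ ∂μ ≤ δ := by
  obtain ⟨φ₀, hsupp, hclose, hcont, -⟩ := hw.exists_hasCompactSupport_lintegral_sub_le hδ
  have hMM : -M ≤ M := by linarith
  set clamp : ℝ → ℝ := fun x => projIcc (-M) M hMM x
  have hclamp (p : α) : clamp (w p) = w p := by
    simp only [clamp, projIcc_of_mem hMM (abs_le.1 (hM p))]
  have hclamp0 : clamp 0 = 0 := by simp only [clamp, projIcc_of_mem hMM ⟨by linarith, hM0⟩]
  refine ⟨clamp ∘ φ₀, continuous_subtype_val.comp (continuous_projIcc.comp hcont),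
    hsupp.comp_left hclamp0, fun p => abs_le.2 (projIcc (-M) M hMM (φ₀ p)).2,
    le_trans (lintegral_mono fun p => ?_) hclose⟩
  simp only [enorm_eq_ofReal_abs, Function.comp_apply]
  refine ENNReal.ofReal_le_ofReal ?_
  calc |w p - clamp (φ₀ p)| = |clamp (w p) - clamp (φ₀ p)| := by rw [hclamp]
    _ ≤ |w p - φ₀ p| := abs_projIcc_sub_projIcc hMM

lemma MeasureTheory.Integrable.exists_continuous_lintegral_expTail_sub_lt {w : α → ℝ}
    (hw : Integrable w μ) {M : ℝ} (hM0 : 0 ≤ M) (hM : ∀ p, |w p| ≤ M) {b η : ℝ} (hb : 0 < b)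
    (hη : 0 < η) :
    ∃ φ : α → ℝ, Continuous φ ∧ HasCompactSupport φ ∧
      ∫⁻ p, ENNReal.ofReal (expTail (b * |w p - φ p|)) ∂μ < ENNReal.ofReal η := by
  set C := exp (2 * b * M) * b
  have hC : 0 < C := by positivity
  obtain ⟨φ, hφc, hφs, hφM, hclose⟩ := hw.exists_continuous_abs_le_lintegral_sub_le hM0 hM
    (ENNReal.ofReal_pos.2 (by positivity : 0 < η / (2 * C))).ne'
  refine ⟨φ, hφc, hφs, ?_⟩
  calc ∫⁻ p, ENNReal.ofReal (expTail (b * |w p - φ p|)) ∂μ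
      ≤ ∫⁻ p, ENNReal.ofReal C * ‖w p - φ p‖ₑ ∂μ := by
        refine lintegral_mono fun p => ?_
        have hbound : b * |w p - φ p| ≤ 2 * b * M := by
          nlinarith [abs_sub (w p) (φ p), hM p, hφM p]
        rw [enorm_eq_ofReal_abs, ← ENNReal.ofReal_mul hC.le]
        refine ENNReal.ofReal_le_ofReal ((expTail_le_exp_mul (by positivity) hbound).trans ?_)
        rw [← mul_assoc]
    _ ≤ ENNReal.ofReal C * ENNReal.ofReal (η / (2 * C)) := by
        rw [lintegral_const_mul' _ _ ENNReal.ofReal_ne_top]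
        gcongr
    _ < ENNReal.ofReal η := by
        have : C * (η / (2 * C)) = η / 2 := by field_simp
        rw [← ENNReal.ofReal_mul hC.le, this, ENNReal.ofReal_lt_ofReal_iff hη]
        linarith

lemma exists_continuous_lintegral_expTail_sub_lt (hm : Measurable h)
    (hsq : ∫⁻ p, ENNReal.ofReal (|h p| ^ 2) ∂μ < ∞)
    (hexp : ∀ δ : ℝ, 0 < δ → ∀ E : Set α, MeasurableSet E → μ E < ∞ →
      ∫⁻ p in E, ENNReal.ofReal (exp (δ * |h p|)) ∂μ < ∞)
    {a η : ℝ} (ha : 0 < a) (hη : 0 < η) :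
    ∃ φ : α → ℝ, Continuous φ ∧ HasCompactSupport φ ∧
      ∫⁻ p, ENNReal.ofReal (expTail (a * |h p - φ p|)) ∂μ < ENNReal.ofReal η := by
  have h2a : 0 < 2 * a := by positivity
  obtain ⟨k, hk, hhw⟩ := ((eventually_gt_atTop 0).and
    ((tendsto_lintegral_expTail_sub_cutoff hm hsq hexp h2a).eventually_lt_const
      (ENNReal.ofReal_pos.2 (half_pos hη)))).exists
  set w := cutoff h k
  have hwm : Measurable w := measurable_cutoff hm k
  obtain ⟨φ, hφc, hφs, hwφ⟩ :=
    (integrable_cutoff hm hsq hk).exists_continuous_lintegral_expTail_sub_lt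
      k.cast_nonneg (abs_cutoff_le k) h2a (half_pos hη)
  refine ⟨φ, hφc, hφs, ?_⟩
  calc ∫⁻ p, ENNReal.ofReal (expTail (a * |h p - φ p|)) ∂μ
      ≤ ∫⁻ p, ENNReal.ofReal (expTail (2 * a * |h p - w p|)) +
          ENNReal.ofReal (expTail (2 * a * |w p - φ p|)) ∂μ :=
        lintegral_mono fun p => (ENNReal.ofReal_le_ofReal
          (expTail_mul_abs_sub_le ha.le (h p) (w p) (φ p))).trans ENNReal.ofReal_add_le
    _ = ∫⁻ p, ENNReal.ofReal (expTail (2 * a * |h p - w p|)) ∂μ +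
          ∫⁻ p, ENNReal.ofReal (expTail (2 * a * |w p - φ p|)) ∂μ :=
        lintegral_add_left (by fun_prop) _
    _ < ENNReal.ofReal (η / 2) + ENNReal.ofReal (η / 2) := ENNReal.add_lt_add hhw hwφ
    _ = ENNReal.ofReal η := by
        rw [← ENNReal.ofReal_add (by positivity) (by positivity), add_halves]

lemma exists_continuous_forall_abs_integral_mul_sub_one_sub_le (hm : Measurable h)
    (hsq : ∫⁻ p, ENNReal.ofReal (|h p| ^ 2) ∂μ < ∞)
    (hexp : ∀ δ : ℝ, 0 < δ → ∀ E : Set α, MeasurableSet E → μ E < ∞ →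
      ∫⁻ p in E, ENNReal.ofReal (exp (δ * |h p|)) ∂μ < ∞)
    (N : ℕ) {ε : ℝ} (hε : 0 < ε) :
    ∃ φ : α → ℝ, Continuous φ ∧ HasCompactSupport φ ∧
      ∀ g : α → ℝ, Measurable g → (∀ p, 0 ≤ g p) →
        ∫⁻ p, ENNReal.ofReal (g p * log (g p) - g p + 1) ∂μ ≤ N →
        Integrable (fun p => φ p * (g p - 1)) μ ∧
          |∫ p, h p * (g p - 1) ∂μ - ∫ p, φ p * (g p - 1) ∂μ| ≤ ε := by
  set a := (N + 1) / ε
  have ha : 0 < a := by positivity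
  obtain ⟨φ, hφc, hφs, hφ⟩ :=
    exists_continuous_lintegral_expTail_sub_lt hm hsq hexp ha one_pos
  refine ⟨φ, hφc, hφs, fun g hgm hg0 hgN => ?_⟩
  have hg : ∫⁻ p, ENNReal.ofReal (g p * log (g p) - g p + 1) ∂μ ≠ ∞ :=
    (hgN.trans_lt (ENNReal.natCast_lt_top N)).ne
  have hh : Integrable (fun p => h p * (g p - 1)) μ :=
    integrable_mul_sub_one hm hgm hg0 hg one_pos
      (lintegral_expTail_mul_abs_lt_top hm hsq hexp one_pos).ne
  have hhφ : Integrable (fun p => (h p - φ p) * (g p - 1)) μ :=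
    integrable_mul_sub_one (by fun_prop) hgm hg0 hg ha hφ.ne_top
  have hφ' : Integrable (fun p => φ p * (g p - 1)) μ :=
    (hh.sub hhφ).congr (Eventually.of_forall fun p => by simp only [Pi.sub_apply]; ring)
  refine ⟨hφ', ?_⟩
  rw [← integral_sub hh hφ']
  simp_rw [← sub_mul]
  rw [← ENNReal.ofReal_le_ofReal_iff hε.le, ← enorm_eq_ofReal_abs]
  calc _ ≤ ENNReal.ofReal a⁻¹ * (N + ENNReal.ofReal 1) :=
        (enorm_integral_mul_sub_one_le hgm hg0 ha).trans (by gcongr)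
    _ = ENNReal.ofReal ε := by
        rw [← ENNReal.ofReal_natCast, ← ENNReal.ofReal_add (by positivity) zero_le_one,
          ← ENNReal.ofReal_mul (by positivity)]
        congr 1
        rw [inv_div, div_mul_cancel₀ _ (by positivity)]

end

lemma tendsto_of_forall_approx {β : Type*} {l : Filter β} {u : β → ℝ} {x : ℝ}
    (H : ∀ ε > 0, ∃ v : β → ℝ, ∃ y, Tendsto v l (𝓝 y) ∧ (∀ n, |u n - v n| ≤ ε) ∧
      |x - y| ≤ ε) :
    Tendsto u l (𝓝 x) := by
  rw [Metric.tendsto_nhds]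
  intro ε hε
  obtain ⟨v, y, hv, huv, hxy⟩ := H (ε / 4) (by positivity)
  filter_upwards [Metric.tendsto_nhds.1 hv (ε / 4) (by positivity)] with n hn
  rw [Real.dist_eq] at hn ⊢
  have h1 := abs_sub_le (u n) (v n) x
  have h2 := abs_sub_le (v n) y x
  rw [abs_sub_comm y x] at h2
  linarith [huv n]

theorem tendsto_integral_mul_sub_one_of_weak_tendsto_general
    {X : Type*} [TopologicalSpace X] [PolishSpace X] [LocallyCompactSpace X]
    [MeasurableSpace X] [BorelSpace X]
    (ν : Measure X) [IsFiniteMeasureOnCompacts ν]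
    (T : ℝ)
    (νT : Measure (ℝ × X)) (hνT : νT = (volume.restrict (Set.Icc 0 T)).prod ν)
    (N : ℕ) (gn : ℕ → ℝ × X → ℝ) (g : ℝ × X → ℝ)
    (hgn : ∀ n, gn n ∈ SN νT N) (hg : g ∈ SN νT N)
    (hconv : ∀ φ : ℝ × X → ℝ, Continuous φ → HasCompactSupport φ →
      Tendsto (fun n => ∫ p, φ p * gn n p ∂νT) atTop (nhds (∫ p, φ p * g p ∂νT)))
    (h : ℝ × X → ℝ) (hmeas : Measurable h)
    (hsq : ∫⁻ p, ENNReal.ofReal (|h p| ^ 2) ∂νT < ⊤)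
    (hexp : ∀ δ : ℝ, 0 < δ → ∀ E : Set (ℝ × X), MeasurableSet E → νT E < ⊤ →
      ∫⁻ p in E, ENNReal.ofReal (Real.exp (δ * |h p|)) ∂νT < ⊤) :
    Tendsto (fun n => ∫ p, h p * (gn n p - 1) ∂νT) atTop
      (nhds (∫ p, h p * (g p - 1) ∂νT)) := by
  have : νT.Regular := hνT ▸ inferInstance
  have : IsFiniteMeasureOnCompacts νT := hνT ▸ inferInstance
  refine tendsto_of_forall_approx fun ε hε => ?_
  obtain ⟨φ, hφc, hφs, hφ⟩ :=
    exists_continuous_forall_abs_integral_mul_sub_one_sub_le hmeas hsq hexp N hε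
  have hφint : Integrable φ νT := hφc.integrable_of_hasCompactSupport hφs
  have hsplit {g' : ℝ × X → ℝ} (hg' : g' ∈ SN νT N) :
      ∫ p, φ p * (g' p - 1) ∂νT = ∫ p, φ p * g' p ∂νT - ∫ p, φ p ∂νT := by
    have hI : Integrable (fun p => φ p * g' p) νT :=
      ((hφ g' hg'.1 hg'.2.1 hg'.2.2).1.add hφint).congr
        (Eventually.of_forall fun p => by simp only [Pi.add_apply]; ring)
    rw [← integral_sub hI hφint]
    simp only [mul_sub_one]
  refine ⟨fun n => ∫ p, φ p * (gn n p - 1) ∂νT, ∫ p, φ p * (g p - 1) ∂νT, ?_,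
    fun n => (hφ _ (hgn n).1 (hgn n).2.1 (hgn n).2.2).2, ?_⟩
  · simp only [hsplit (hgn _), hsplit hg]
    exact (hconv φ hφc hφs).sub_const _
  · exact (hφ g hg.1 hg.2.1 hg.2.2).2

theorem tendsto_integral_mul_sub_one_of_weak_tendsto
    {X : Type*} [TopologicalSpace X] [PolishSpace X] [LocallyCompactSpace X]
    [MeasurableSpace X] [BorelSpace X]
    (ν : Measure X) [IsFiniteMeasureOnCompacts ν]
    (T : ℝ) (hT : 0 < T)
    (νT : Measure (ℝ × X)) (hνT : νT = (volume.restrict (Set.Icc 0 T)).prod ν)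
    (N : ℕ) (gn : ℕ → ℝ × X → ℝ) (g : ℝ × X → ℝ)
    (hgn : ∀ n, gn n ∈ SN νT N) (hg : g ∈ SN νT N)
    (hconv : ∀ φ : ℝ × X → ℝ, Continuous φ → HasCompactSupport φ →
      Tendsto (fun n => ∫ p, φ p * gn n p ∂νT) atTop (nhds (∫ p, φ p * g p ∂νT)))
    (h : ℝ × X → ℝ) (hmeas : Measurable h)
    (hsq : ∫⁻ p, ENNReal.ofReal (|h p| ^ 2) ∂νT < ⊤)
    (hexp : ∀ δ : ℝ, 0 < δ → ∀ E : Set (ℝ × X), MeasurableSet E → νT E < ⊤ →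
      ∫⁻ p in E, ENNReal.ofReal (Real.exp (δ * |h p|)) ∂νT < ⊤) :
    Tendsto (fun n => ∫ p, h p * (gn n p - 1) ∂νT) atTop
      (nhds (∫ p, h p * (g p - 1) ∂νT)) :=
  tendsto_integral_mul_sub_one_of_weak_tendsto_general ν T νT hνT N gn g hgn hg hconv h hmeas hsq
    hexp
end

section
/- For every N ∈ ℕ the set S^N is sequentially compact in the following sense: every sequence (g_n) in S^N admits a subsequence (g_{n_k}) and an element g ∈ S^N such that for every continuous compactly supported function φ : X_T → ℝ one has ∫_{X_T} φ(t,v) g_{n_k}(t,v) ν_T(dt,dv) → ∫_{X_T} φ(t,v) g(t,v) ν_T(dt,dv) as k → ∞. -/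
/-
Truncate at level `L`: since `(r - 1)² ≤ (√L + 1)² klFun r` on `[0, L]`, the functions
`min gₙ L - 1` stay in a ball of `L²(ν_T)` even though `ν_T` may be infinite, and sequential
Banach–Alaoglu, applied to all levels `L = 1, 2, …` at once, gives one subsequence along which
`min gₙ L ⇀ Z_L` for every `L`. Weak limits preserve order, so `0 ≤ Z_L ≤ L` increases with `L`;
put `g = sup_L Z_L`. The entropy bound survives each weak limit by Young's inequality
`r t - (eᵗ - 1) ≤ r log r - r + 1`, and then the monotone limit by Fatou. Finally
`∫ (gₙ - min gₙ L) ≤ N / (log L - 1)` uniformly in `n`, so the truncation error vanishes uniformly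
and the subsequence itself converges to `g`.
-/

open MeasureTheory Filter
open scoped ENNReal

open Topology
open scoped NNReal RealInnerProductSpace
open Real InformationTheory

lemma mul_sub_exp_sub_one_le_klFun {r : ℝ} (hr : 0 ≤ r) (t : ℝ) :
    r * t - (exp t - 1) ≤ klFun r := by
  rcases hr.eq_or_lt with rfl | hr
  · simp [klFun_zero, (exp_pos t).le]
  · have h := mul_le_mul_of_nonneg_left (add_one_le_exp (t - log r)) hr.le
    rw [exp_sub, exp_log hr, mul_div_cancel₀ _ hr.ne'] at h
    rw [klFun_apply]
    linarith

lemma klFun_min_le {r L : ℝ} (hr : 0 ≤ r) (hL : 1 ≤ L) : klFun (min r L) ≤ klFun r := by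
  rcases le_total r L with h | h
  · rw [min_eq_left h]
  · rw [min_eq_right h, klFun_apply]
    have := mul_sub_exp_sub_one_le_klFun hr (log L)
    rw [exp_log (zero_lt_one.trans_le hL)] at this
    nlinarith [log_nonneg hL]

lemma sub_min_le_klFun_div {r L : ℝ} (hr : 0 ≤ r) (hL : exp 1 < L) :
    r - min r L ≤ klFun r / (log L - 1) := by
  have hL0 : 0 < L := (exp_pos 1).trans hL
  have hlogL : 0 < log L - 1 := by rw [sub_pos, lt_log_iff_exp_lt hL0]; exact hL
  rw [le_div_iff₀ hlogL]
  rcases le_total r L with h | h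
  · rw [min_eq_left h, sub_self, zero_mul]; exact klFun_nonneg hr
  · rw [min_eq_right h, klFun_apply]
    nlinarith [log_le_log hL0 h]

lemma le_klFun_add_exp_two {r : ℝ} (hr : 0 ≤ r) : r ≤ klFun r + exp 2 := by
  have h := sub_min_le_klFun_div hr (exp_lt_exp.mpr one_lt_two)
  rw [log_exp, show (2 : ℝ) - 1 = 1 by norm_num, div_one] at h
  linarith [min_le_right r (exp 2)]

lemma sq_sub_one_le_mul_klFun {r L : ℝ} (hr : 0 ≤ r) (hrL : r ≤ L) :
    (r - 1) ^ 2 ≤ (√L + 1) ^ 2 * klFun r := by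
  set s := √r
  have hs0 : 0 ≤ s := sqrt_nonneg r
  have hr_eq : r = s ^ 2 := (sq_sqrt hr).symm
  have hellinger : (s - 1) ^ 2 ≤ klFun r := by
    have : klFun r - (s - 1) ^ 2 = 2 * s * klFun s := by
      rw [hr_eq, klFun_apply, klFun_apply, log_pow]; push_cast; ring
    nlinarith [mul_nonneg (mul_nonneg zero_le_two hs0) (klFun_nonneg hs0)]
  have hsL : s + 1 ≤ √L + 1 := by gcongr; exact sqrt_le_sqrt hrL
  calc (r - 1) ^ 2 = (s + 1) ^ 2 * (s - 1) ^ 2 := by rw [hr_eq]; ring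
    _ ≤ (√L + 1) ^ 2 * klFun r := by gcongr

lemma klFun_sub_le_mul_log_max_sub {z δ : ℝ} (hz : 0 ≤ z) (hδ : 0 < δ) (hδ1 : δ ≤ 1) :
    klFun z - (δ - δ * log δ) ≤ z * log (max z δ) - (max z δ - 1) := by
  have hδlog : δ * log δ ≤ 0 := mul_nonpos_of_nonneg_of_nonpos hδ.le (log_nonpos hδ.le hδ1)
  rcases le_total δ z with h | h
  · rw [max_eq_left h, klFun_apply]; linarith
  · rw [max_eq_right h, klFun_apply]
    have : z * log z ≤ z * log δ := by
      rcases hz.eq_or_lt with rfl | hz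
      · simp
      · exact mul_le_mul_of_nonneg_left (log_le_log hz h) hz.le
    linarith

lemma klFun_le_max_one {z L : ℝ} (hz : 0 ≤ z) (hzL : z ≤ L) : klFun z ≤ max 1 (klFun L) := by
  simpa [klFun_zero] using
    convexOn_klFun.le_max_of_mem_Icc Set.self_mem_Ici (hz.trans hzL) ⟨hz, hzL⟩

lemma tendsto_toReal_iSup_ofReal {z : ℕ → ℝ} (hz : Monotone z) (hz0 : ∀ M, 0 ≤ z M)
    (hfin : ⨆ M, ENNReal.ofReal (z M) ≠ ∞) :
    Tendsto z atTop (𝓝 (⨆ M, ENNReal.ofReal (z M)).toReal) := by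
  have := (ENNReal.tendsto_toReal hfin).comp (tendsto_atTop_iSup (ENNReal.ofReal_mono.comp hz))
  simpa [Function.comp_def, hz0] using this

/-- The countable product of the dual balls is a compact metrizable subset of a product of weak
duals, hence sequentially compact (Banach–Alaoglu). -/
theorem exists_subseq_forall_tendsto_inner {H ι : Type*} [NormedAddCommGroup H]
    [InnerProductSpace ℝ H] [CompleteSpace H] [TopologicalSpace.SeparableSpace H] [Countable ι]
    (x : ι → ℕ → H) (C : ι → ℝ) (hx : ∀ i n, ‖x i n‖ ≤ C i) :
    ∃ σ : ℕ → ℕ, StrictMono σ ∧ ∃ y : ι → H,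
      ∀ i e, Tendsto (fun k => ⟪x i (σ k), e⟫) atTop (𝓝 ⟪y i, e⟫) := by
  let B : ι → Set (WeakDual ℝ H) := fun i =>
    WeakDual.toStrongDual ⁻¹' Metric.closedBall 0 (C i)
  have hB : ∀ i, IsCompact (B i) := fun i => WeakDual.isCompact_closedBall 0 (C i)
  have := fun i => isCompact_iff_compactSpace.mp (hB i)
  have := fun i => WeakDual.metrizable_of_isCompact ℝ H (B i) (hB i)
  let s : ℕ → ∀ i, B i := fun n i =>
    ⟨StrongDual.toWeakDual (InnerProductSpace.toDual ℝ H (x i n)), by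
      simpa [B, LinearIsometryEquiv.norm_map] using hx i n⟩
  obtain ⟨z, σ, hσ, hs⟩ := SeqCompactSpace.tendsto_subseq s
  refine ⟨σ, hσ, fun i => (InnerProductSpace.toDual ℝ H).symm (z i).1, fun i e => ?_⟩
  have := ((WeakDual.eval_continuous e).comp continuous_subtype_val).tendsto (z i)
  convert this.comp (((continuous_apply i).tendsto z).comp hs) using 2
  · simp [s]
  · exact InnerProductSpace.toDual_symm_apply

section WeakLimits

variable {α : Type*} [MeasurableSpace α] {μ : Measure α}

section Entropy

variable {f : α → ℝ}

lemma integrable_klFun_comp {N : ℝ≥0} (hf : Measurable f) (hf0 : ∀ x, 0 ≤ f x)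
    (h : ∫⁻ x, ENNReal.ofReal (klFun (f x)) ∂μ ≤ N) : Integrable (fun x => klFun (f x)) μ :=
  ⟨(measurable_klFun.comp hf).aestronglyMeasurable,
    (hasFiniteIntegral_iff_ofReal (.of_forall fun x => klFun_nonneg (hf0 x))).mpr
      (h.trans_lt ENNReal.coe_lt_top)⟩

lemma integral_klFun_comp_le {N : ℝ≥0} (hf : Measurable f) (hf0 : ∀ x, 0 ≤ f x)
    (h : ∫⁻ x, ENNReal.ofReal (klFun (f x)) ∂μ ≤ N) : ∫ x, klFun (f x) ∂μ ≤ N := by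
  rw [integral_eq_lintegral_of_nonneg_ae (.of_forall fun x => klFun_nonneg (hf0 x))
    (measurable_klFun.comp hf).aestronglyMeasurable]
  exact ENNReal.toReal_le_of_le_ofReal N.coe_nonneg (h.trans_eq ENNReal.ofReal_coe_nnreal.symm)

lemma integrableOn_klFun_comp {s : Set α} {L : ℝ} (hf : Measurable f) (hf0 : 0 ≤ᵐ[μ] f)
    (hfL : ∀ᵐ x ∂μ, f x ≤ L) (hμs : μ s < ∞) : IntegrableOn (fun x => klFun (f x)) s μ :=
  Measure.integrableOn_of_bounded hμs.ne (measurable_klFun.comp hf).aestronglyMeasurable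
    (M := max 1 (klFun L)) <| ae_restrict_of_ae <| by
      filter_upwards [hf0, hfL] with x h0 hL
      rw [norm_of_nonneg (klFun_nonneg h0)]
      exact klFun_le_max_one h0 hL

lemma setIntegral_log_mul_sub_le {a : α → ℝ} {s : Set α} {N : ℝ≥0} (hf : Measurable f)
    (hf0 : ∀ x, 0 ≤ f x) (hcost : ∫⁻ x, ENNReal.ofReal (klFun (f x)) ∂μ ≤ N)
    (hs : MeasurableSet s) (ha : ∀ x, 0 < a x)
    (haf : IntegrableOn (fun x => log (a x) * f x) s μ)
    (ha1 : IntegrableOn (fun x => a x - 1) s μ) :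
    ∫ x in s, log (a x) * f x ∂μ - ∫ x in s, (a x - 1) ∂μ ≤ N := by
  have hint := integrable_klFun_comp hf hf0 hcost
  rw [← integral_sub haf ha1]
  calc _ ≤ ∫ x in s, klFun (f x) ∂μ :=
        setIntegral_mono_on (haf.sub ha1) hint.integrableOn hs fun x _ => by
          have := mul_sub_exp_sub_one_le_klFun (hf0 x) (log (a x))
          rw [exp_log (ha x)] at this
          simp only [Pi.sub_apply]
          linarith [mul_comm (log (a x)) (f x)]
    _ ≤ ∫ x, klFun (f x) ∂μ :=
        setIntegral_le_integral hint (.of_forall fun x => klFun_nonneg (hf0 x))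
    _ ≤ N := integral_klFun_comp_le hf hf0 hcost

lemma setLIntegral_ofReal_le_of_lintegral_klFun_le {C : ℝ≥0∞} (hf0 : 0 ≤ᵐ[μ] f)
    (h : ∫⁻ x, ENNReal.ofReal (klFun (f x)) ∂μ ≤ C) (s : Set α) :
    ∫⁻ x in s, ENNReal.ofReal (f x) ∂μ ≤ C + ENNReal.ofReal (exp 2) * μ s :=
  calc ∫⁻ x in s, ENNReal.ofReal (f x) ∂μ
      ≤ ∫⁻ x in s, (ENNReal.ofReal (klFun (f x)) + ENNReal.ofReal (exp 2)) ∂μ :=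
        lintegral_mono_ae <| ae_restrict_of_ae <| hf0.mono fun x hx =>
          (ENNReal.ofReal_le_ofReal (le_klFun_add_exp_two hx)).trans ENNReal.ofReal_add_le
    _ = ∫⁻ x in s, ENNReal.ofReal (klFun (f x)) ∂μ + ENNReal.ofReal (exp 2) * μ s := by
        rw [lintegral_add_right _ measurable_const, setLIntegral_const]
    _ ≤ C + ENNReal.ofReal (exp 2) * μ s := by
        gcongr; exact (setLIntegral_le_lintegral _ _).trans h

lemma lintegral_klFun_le_of_tendsto {Z : ℕ → α → ℝ} {g : α → ℝ} {C : ℝ≥0∞}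
    (hZ : ∀ M, Measurable (Z M)) (hlim : ∀ᵐ x ∂μ, Tendsto (fun M => Z M x) atTop (𝓝 (g x)))
    (hcost : ∀ M, ∫⁻ x, ENNReal.ofReal (klFun (Z M x)) ∂μ ≤ C) :
    ∫⁻ x, ENNReal.ofReal (klFun (g x)) ∂μ ≤ C :=
  calc ∫⁻ x, ENNReal.ofReal (klFun (g x)) ∂μ
      = ∫⁻ x, liminf (fun M => ENNReal.ofReal (klFun (Z M x))) atTop ∂μ :=
        lintegral_congr_ae <| hlim.mono fun _ hx =>
          (((ENNReal.continuous_ofReal.comp continuous_klFun).tendsto _).comp hx).liminf_eq.symm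
    _ ≤ liminf (fun M => ∫⁻ x, ENNReal.ofReal (klFun (Z M x)) ∂μ) atTop :=
        lintegral_liminf_le' fun M => ((measurable_klFun.comp (hZ M)).ennreal_ofReal).aemeasurable
    _ ≤ C := liminf_le_of_frequently_le' (.of_forall hcost)

lemma abs_integral_mul_sub_integral_mul_min_le {v : α → ℝ} {C L : ℝ} {N : ℝ≥0}
    (hv : ∀ x, |v x| ≤ C) (hC : 0 ≤ C) (hf : Measurable f) (hf0 : ∀ x, 0 ≤ f x)
    (hcost : ∫⁻ x, ENNReal.ofReal (klFun (f x)) ∂μ ≤ N) (hL : exp 1 < L)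
    (hvf : Integrable (fun x => v x * f x) μ) (hvu : Integrable (fun x => v x * min (f x) L) μ) :
    |∫ x, v x * f x ∂μ - ∫ x, v x * min (f x) L ∂μ| ≤ C * N / (log L - 1) := by
  have hlogL : 0 < log L - 1 := by
    rw [sub_pos, lt_log_iff_exp_lt ((exp_pos 1).trans hL)]; exact hL
  have hint := integrable_klFun_comp hf hf0 hcost
  rw [← integral_sub hvf hvu, ← norm_eq_abs]
  calc ‖∫ x, (v x * f x - v x * min (f x) L) ∂μ‖
      ≤ ∫ x, C / (log L - 1) * klFun (f x) ∂μ :=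
        norm_integral_le_of_norm_le (hint.const_mul _) <| .of_forall fun x => by
          rw [← mul_sub, norm_mul, norm_eq_abs, norm_of_nonneg (sub_nonneg.mpr (min_le_left _ _)),
            div_mul_comm, mul_comm]
          exact mul_le_mul (sub_min_le_klFun_div (hf0 x) hL) (hv x) (abs_nonneg _)
            (div_nonneg (klFun_nonneg (hf0 x)) hlogL.le)
    _ = C / (log L - 1) * ∫ x, klFun (f x) ∂μ := integral_const_mul _ _
    _ ≤ C / (log L - 1) * N :=
        mul_le_mul_of_nonneg_left (integral_klFun_comp_le hf hf0 hcost) (by positivity)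
    _ = C * N / (log L - 1) := by ring

lemma ae_iSup_ofReal_ne_top [SigmaFinite μ] {Z : ℕ → α → ℝ} {C : ℝ≥0∞}
    (hZ : ∀ M, Measurable (Z M)) (hZ0 : ∀ M, 0 ≤ᵐ[μ] Z M)
    (hmono : ∀ᵐ x ∂μ, Monotone fun M => Z M x) (hC : C ≠ ∞)
    (hcost : ∀ M, ∫⁻ x, ENNReal.ofReal (klFun (Z M x)) ∂μ ≤ C) :
    ∀ᵐ x ∂μ, ⨆ M, ENNReal.ofReal (Z M x) ≠ ∞ := by
  refine ae_of_forall_measure_lt_top_ae_restrict _ fun s _ hμs => ?_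
  have hlint : ∫⁻ x in s, ⨆ M, ENNReal.ofReal (Z M x) ∂μ ≠ ∞ := by
    rw [lintegral_iSup' (fun M => (hZ M).ennreal_ofReal.aemeasurable)
      (ae_restrict_of_ae (hmono.mono fun x hx => ENNReal.ofReal_mono.comp hx))]
    refine ((iSup_le fun M =>
      setLIntegral_ofReal_le_of_lintegral_klFun_le (hZ0 M) (hcost M) s).trans_lt
        (ENNReal.add_lt_top.mpr ⟨hC.lt_top, ENNReal.mul_lt_top ENNReal.ofReal_lt_top hμs⟩)).ne
  exact (ae_lt_top' (Measurable.iSup fun M => (hZ M).ennreal_ofReal).aemeasurable hlint).mono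
    fun x hx => hx.ne

end Entropy

structure IsTestFunction (μ : Measure α) (v : α → ℝ) : Prop where
  measurable : Measurable v
  bounded : ∃ C, ∀ x, |v x| ≤ C
  measure_support_lt_top : μ (Function.support v) < ∞

namespace IsTestFunction

variable {v : α → ℝ}

lemma memLp (hv : IsTestFunction μ v) (p : ℝ≥0∞) : MemLp v p μ := by
  obtain ⟨C, hC⟩ := hv.bounded
  exact (memLp_top_of_bound hv.measurable.aestronglyMeasurable C (.of_forall hC))
    |>.mono_exponent_of_measure_support_ne_top (fun x => Function.notMem_support.mp)
      hv.measure_support_lt_top.ne le_top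

lemma integrable (hv : IsTestFunction μ v) : Integrable v μ :=
  memLp_one_iff_integrable.mp (hv.memLp 1)

lemma indicator {s : Set α} {q : α → ℝ} {C : ℝ} (hs : MeasurableSet s) (hμs : μ s < ∞)
    (hq : Measurable q) (hqC : ∀ x, |q x| ≤ C) : IsTestFunction μ (s.indicator q) where
  measurable := hq.indicator hs
  bounded := ⟨C, fun x => by
    by_cases hx : x ∈ s
    · simpa [hx] using hqC x
    · simpa [hx] using (abs_nonneg _).trans (hqC x)⟩
  measure_support_lt_top := (measure_mono (Set.support_indicator_subset)).trans_lt hμs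

lemma integrable_mul_Lp (hv : IsTestFunction μ v) (y : Lp ℝ 2 μ) :
    Integrable (fun x => v x * y x) μ := by
  refine (L2.integrable_inner y ((hv.memLp 2).toLp v)).congr ?_
  filter_upwards [(hv.memLp 2).coeFn_toLp] with x hx
  simp [hx]

lemma integral_mul_Lp (hv : IsTestFunction μ v) (y : Lp ℝ 2 μ) :
    ∫ x, v x * y x ∂μ = ⟪y, (hv.memLp 2).toLp v⟫ := by
  rw [L2.inner_def]
  refine integral_congr_ae ?_
  filter_upwards [(hv.memLp 2).coeFn_toLp] with x hx
  simp [hx]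

lemma integrable_mul_of_lintegral_klFun_le {f : α → ℝ} {C : ℝ≥0∞}
    (hv : IsTestFunction μ v) (hf : AEStronglyMeasurable f μ) (hf0 : 0 ≤ᵐ[μ] f)
    (h : ∫⁻ x, ENNReal.ofReal (klFun (f x)) ∂μ ≤ C) (hC : C ≠ ∞) :
    Integrable (fun x => v x * f x) μ := by
  set s := Function.support v
  have hs : MeasurableSet s := measurableSet_support hv.measurable
  have hfs : IntegrableOn f s μ :=
    ⟨hf.restrict, (hasFiniteIntegral_iff_ofReal (ae_restrict_of_ae hf0)).mpr <|
      (setLIntegral_ofReal_le_of_lintegral_klFun_le hf0 h s).trans_lt <|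
        ENNReal.add_lt_top.mpr ⟨hC.lt_top, ENNReal.mul_lt_top ENNReal.ofReal_lt_top
          hv.measure_support_lt_top⟩⟩
  obtain ⟨B, hB⟩ := hv.bounded
  refine (((integrable_indicator_iff hs).mpr hfs).bdd_mul hv.measurable.aestronglyMeasurable
    (c := B) (.of_forall hB)).congr (.of_forall fun x => ?_)
  by_cases hx : x ∈ s
  · simp [Set.indicator_of_mem hx]
  · simp [Function.notMem_support.mp hx]

end IsTestFunction

lemma HasCompactSupport.isTestFunction [TopologicalSpace α] [OpensMeasurableSpace α]
    [IsFiniteMeasureOnCompacts μ] {φ : α → ℝ} (hφc : HasCompactSupport φ) (hφ : Continuous φ) :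
    IsTestFunction μ φ where
  measurable := hφ.measurable
  bounded := hφc.exists_bound_of_continuous hφ
  measure_support_lt_top := (measure_mono (subset_tsupport φ)).trans_lt hφc.measure_lt_top

/-- Convergence of the measures `f k • μ` to `F • μ` against test functions. The integrability
clauses keep junk values of the Bochner integral out. -/
def WeakTendsto (μ : Measure α) (f : ℕ → α → ℝ) (F : α → ℝ) : Prop :=
  ∀ v, IsTestFunction μ v → (∀ k, Integrable (fun x => v x * f k x) μ) ∧
    Integrable (fun x => v x * F x) μ ∧
    Tendsto (fun k => ∫ x, v x * f k x ∂μ) atTop (𝓝 (∫ x, v x * F x ∂μ))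

lemma weakTendsto_const (c : ℝ) : WeakTendsto μ (fun _ _ => c) (fun _ => c) := fun _ hv =>
  ⟨fun _ => hv.integrable.mul_const c, hv.integrable.mul_const c, tendsto_const_nhds⟩

lemma weakTendsto_of_tendsto_inner {f : ℕ → α → ℝ} {F : α → ℝ} {x : ℕ → Lp ℝ 2 μ}
    {y : Lp ℝ 2 μ} (hx : ∀ k, (fun a => f k a - 1) =ᵐ[μ] x k) (hy : (fun a => F a - 1) =ᵐ[μ] y)
    (h : ∀ e, Tendsto (fun k => ⟪x k, e⟫) atTop (𝓝 ⟪y, e⟫)) : WeakTendsto μ f F := by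
  have hsplit : ∀ {G : α → ℝ} {z : Lp ℝ 2 μ}, (fun a => G a - 1) =ᵐ[μ] z →
      ∀ {v}, IsTestFunction μ v → (fun a => v a * G a) =ᵐ[μ] fun a => v a * z a + v a := by
    intro G z hz v _
    filter_upwards [hz] with a ha
    rw [← ha]; ring
  intro v hv
  refine ⟨fun k => ((hv.integrable_mul_Lp _).add hv.integrable).congr (hsplit (hx k) hv).symm,
    ((hv.integrable_mul_Lp _).add hv.integrable).congr (hsplit hy hv).symm, ?_⟩
  simp_rw [integral_congr_ae (hsplit (hx _) hv), integral_congr_ae (hsplit hy hv),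
    integral_add (hv.integrable_mul_Lp _) hv.integrable, hv.integral_mul_Lp]
  exact (h _).add_const _

namespace WeakTendsto

variable {f : ℕ → α → ℝ} {F : α → ℝ} {N : ℝ≥0}

lemma integrableOn (h : WeakTendsto μ f F) {s : Set α} (hs : MeasurableSet s) (hμs : μ s < ∞) :
    IntegrableOn F s μ := by
  have := (h _ (IsTestFunction.indicator hs hμs measurable_const (C := 1)
    fun _ => (abs_one (α := ℝ)).le)).2.1
  simp_rw [← Set.indicator_mul_left, one_mul] at this
  exact (integrable_indicator_iff hs).mp this

lemma tendsto_setIntegral (h : WeakTendsto μ f F) {s : Set α} (hs : MeasurableSet s)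
    (hμs : μ s < ∞) :
    (∀ k, IntegrableOn (f k) s μ) ∧
      Tendsto (fun k => ∫ x in s, f k x ∂μ) atTop (𝓝 (∫ x in s, F x ∂μ)) := by
  obtain ⟨hfk, -, hlim⟩ := h _ (IsTestFunction.indicator hs hμs measurable_const (C := 1)
    fun _ => (abs_one (α := ℝ)).le)
  simp_rw [← Set.indicator_mul_left, one_mul, integral_indicator hs] at hfk hlim
  exact ⟨fun k => (integrable_indicator_iff hs).mp (hfk k), hlim⟩

lemma ae_le [SigmaFinite μ] {g : ℕ → α → ℝ} {G : α → ℝ} (hf : WeakTendsto μ f F)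
    (hg : WeakTendsto μ g G) (hfg : ∀ k x, f k x ≤ g k x) : F ≤ᵐ[μ] G := by
  have h := ae_nonneg_of_forall_setIntegral_nonneg_of_sigmaFinite (f := G - F)
    (fun s hs hμs => (hg.integrableOn hs hμs).sub (hf.integrableOn hs hμs)) fun s hs hμs => by
      obtain ⟨hfi, hfl⟩ := hf.tendsto_setIntegral hs hμs
      obtain ⟨hgi, hgl⟩ := hg.tendsto_setIntegral hs hμs
      rw [Pi.sub_def, integral_sub (hg.integrableOn hs hμs) (hf.integrableOn hs hμs), sub_nonneg]
      exact le_of_tendsto_of_tendsto' hfl hgl fun k =>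
        setIntegral_mono_on (hfi k) (hgi k) hs fun x _ => hfg k x
  filter_upwards [h] with x hx
  simpa using hx

/-- Lower semicontinuity of the entropy, via Young's inequality `r t - (eᵗ - 1) ≤ klFun r` tested
with `t = log (max F δ)`. -/
lemma setIntegral_klFun_le {L : ℝ} (h : WeakTendsto μ f F) (hf : ∀ k, Measurable (f k))
    (hf0 : ∀ k x, 0 ≤ f k x) (hcost : ∀ k, ∫⁻ x, ENNReal.ofReal (klFun (f k x)) ∂μ ≤ N)
    (hF : Measurable F) (hF0 : 0 ≤ᵐ[μ] F) (hFL : ∀ᵐ x ∂μ, F x ≤ L) (hL : 1 ≤ L)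
    {δ : ℝ} (hδ : 0 < δ) (hδ1 : δ ≤ 1) {s : Set α} (hs : MeasurableSet s) (hμs : μ s < ∞) :
    ∫ x in s, klFun (F x) ∂μ ≤ N + (δ - δ * log δ) * μ.real s := by
  -- clamping at `L` changes `max F δ` only on a null set and makes `log a` bounded
  set a : α → ℝ := fun x => max (min (F x) L) δ
  have ha : Measurable a := (hF.min measurable_const).max measurable_const
  have ha_pos : ∀ x, 0 < a x := fun x => hδ.trans_le (le_max_right _ _)
  have ha_le : ∀ x, a x ≤ L := fun x => max_le (min_le_right _ _) (hδ1.trans hL)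
  have hlog_bd : ∀ x, |log (a x)| ≤ |log δ| + log L := fun x => by
    have h1 : log δ ≤ log (a x) := log_le_log hδ (le_max_right _ _)
    have h2 : log (a x) ≤ log L := log_le_log (ha_pos x) (ha_le x)
    rw [abs_le]; constructor <;> linarith [neg_abs_le (log δ), abs_nonneg (log δ), log_nonneg hL]
  obtain ⟨hfv, hFv, hlim⟩ :=
    h _ (IsTestFunction.indicator hs hμs ha.log hlog_bd)
  simp_rw [← Set.indicator_mul_left, integral_indicator hs, integrable_indicator_iff hs]
    at hfv hFv hlim
  have ha_int : IntegrableOn (fun x => a x - 1) s μ :=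
    Measure.integrableOn_of_bounded hμs.ne (ha.sub_const 1).aestronglyMeasurable (M := L + 1)
      (ae_of_all _ fun x => by
        rw [norm_eq_abs, abs_le]; constructor <;> linarith [ha_pos x, ha_le x])
  have hyoung : ∀ k, ∫ x in s, log (a x) * f k x ∂μ - ∫ x in s, (a x - 1) ∂μ ≤ N := fun k =>
    setIntegral_log_mul_sub_le (hf k) (hf0 k) (hcost k) hs ha_pos (hfv k) ha_int
  have hpt : ∀ᵐ x ∂μ.restrict s, klFun (F x) - (δ - δ * log δ) ≤ log (a x) * F x - (a x - 1) :=
    ae_restrict_of_ae <| by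
      filter_upwards [hF0, hFL] with x h0 hxL
      have := klFun_sub_le_mul_log_max_sub h0 hδ hδ1
      simp only [a, min_eq_left hxL]
      linarith [mul_comm (log (max (F x) δ)) (F x)]
  have hmono : ∫ x in s, (klFun (F x) - (δ - δ * log δ)) ∂μ
      ≤ ∫ x in s, (log (a x) * F x - (a x - 1)) ∂μ := integral_mono_ae
    ((integrableOn_klFun_comp hF hF0 hFL hμs).sub (integrableOn_const hμs.ne)) (hFv.sub ha_int)
    hpt
  rw [integral_sub (integrableOn_klFun_comp hF hF0 hFL hμs) (integrableOn_const hμs.ne),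
    integral_sub hFv ha_int, setIntegral_const, smul_eq_mul] at hmono
  linarith [le_of_tendsto' (hlim.sub_const (∫ x in s, (a x - 1) ∂μ)) hyoung]

lemma lintegral_klFun_le [SigmaFinite μ] {L : ℝ} (h : WeakTendsto μ f F)
    (hf : ∀ k, Measurable (f k)) (hf0 : ∀ k x, 0 ≤ f k x)
    (hcost : ∀ k, ∫⁻ x, ENNReal.ofReal (klFun (f k x)) ∂μ ≤ N)
    (hF : Measurable F) (hF0 : 0 ≤ᵐ[μ] F) (hFL : ∀ᵐ x ∂μ, F x ≤ L) (hL : 1 ≤ L) :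
    ∫⁻ x, ENNReal.ofReal (klFun (F x)) ∂μ ≤ N := by
  refine lintegral_le_of_forall_fin_meas_le _ fun s hs hμs => ?_
  have hcont : Continuous fun δ : ℝ => (N : ℝ) + (δ - δ * log δ) * μ.real s := by
    have := continuous_mul_log
    fun_prop
  have hlim := (hcont.tendsto 0).mono_left (nhdsWithin_le_nhds (s := Set.Ioi 0))
  simp only [zero_mul, sub_zero, add_zero] at hlim
  have hle : ∫ x in s, klFun (F x) ∂μ ≤ N := ge_of_tendsto hlim <| by
    filter_upwards [Ioc_mem_nhdsGT zero_lt_one] with δ hδ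
    exact h.setIntegral_klFun_le hf hf0 hcost hF hF0 hFL hL hδ.1 hδ.2 hs hμs.lt_top
  rw [← ofReal_integral_eq_lintegral_ofReal (integrableOn_klFun_comp hF hF0 hFL hμs.lt_top)
    (ae_restrict_of_ae (hF0.mono fun x hx => klFun_nonneg hx))]
  exact (ENNReal.ofReal_le_ofReal hle).trans_eq ENNReal.ofReal_coe_nnreal

lemma of_min {Z : ℕ → α → ℝ} {g : α → ℝ} {L : ℕ → ℝ}
    (hf : ∀ n, Measurable (f n)) (hf0 : ∀ n x, 0 ≤ f n x)
    (hcost : ∀ n, ∫⁻ x, ENNReal.ofReal (klFun (f n x)) ∂μ ≤ N)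
    (hg : Measurable g) (hg0 : ∀ x, 0 ≤ g x) (hgcost : ∫⁻ x, ENNReal.ofReal (klFun (g x)) ∂μ ≤ N)
    (hL : Tendsto L atTop atTop) (hZ : ∀ M, WeakTendsto μ (fun k x => min (f k x) (L M)) (Z M))
    (hZg : ∀ᵐ x ∂μ, Tendsto (fun M => Z M x) atTop (𝓝 (g x)))
    (hZle : ∀ M, ∀ᵐ x ∂μ, |Z M x| ≤ g x) :
    WeakTendsto μ f g := by
  intro v hv
  obtain ⟨C, hC⟩ := hv.bounded
  have hvf : ∀ k, Integrable (fun x => v x * f k x) μ := fun k =>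
    hv.integrable_mul_of_lintegral_klFun_le (hf k).aestronglyMeasurable (.of_forall (hf0 k))
      (hcost k) ENNReal.coe_ne_top
  have hvg : Integrable (fun x => v x * g x) μ :=
    hv.integrable_mul_of_lintegral_klFun_le hg.aestronglyMeasurable (.of_forall hg0) hgcost
      ENNReal.coe_ne_top
  refine ⟨hvf, hvg, ?_⟩
  have htrunc : TendstoUniformly (fun M k => ∫ x, v x * min (f k x) (L M) ∂μ)
      (fun k => ∫ x, v x * f k x ∂μ) atTop := by
    rw [Metric.tendstoUniformly_iff]
    intro ε hε
    have herr : Tendsto (fun M => |C| * N / (log (L M) - 1)) atTop (𝓝 0) :=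
      tendsto_const_nhds.div_atTop <|
        tendsto_atTop_add_const_right _ (-1) (tendsto_log_atTop.comp hL)
    filter_upwards [herr.eventually (gt_mem_nhds hε), hL.eventually_gt_atTop (exp 1)]
      with M hMε hM k
    rw [Real.dist_eq]
    exact (abs_integral_mul_sub_integral_mul_min_le (fun x => (hC x).trans (le_abs_self C))
      (abs_nonneg C) (hf k) (hf0 k) (hcost k) hM (hvf k) ((hZ M v hv).1 k)).trans_lt hMε
  refine htrunc.tendsto_of_eventually_tendsto (.of_forall fun M => (hZ M v hv).2.2) ?_
  refine tendsto_integral_of_dominated_convergence _ (fun M => (hZ M v hv).2.1.aestronglyMeasurable)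
    hvg.norm (fun M => (hZle M).mono fun x hx => ?_) (hZg.mono fun x hx => hx.const_mul (v x))
  rw [norm_mul, norm_mul, norm_eq_abs (Z M x), norm_of_nonneg (hg0 x)]
  exact mul_le_mul_of_nonneg_left hx (norm_nonneg _)

end WeakTendsto

theorem exists_subseq_weakTendsto_min [IsSeparable μ] {ι : Type*} [Countable ι]
    {f : ℕ → α → ℝ} (hf : ∀ n, Measurable (f n)) (hf0 : ∀ n x, 0 ≤ f n x) {N : ℝ≥0}
    (hcost : ∀ n, ∫⁻ x, ENNReal.ofReal (klFun (f n x)) ∂μ ≤ N) (L : ι → ℝ) (hL : ∀ i, 1 ≤ L i) :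
    ∃ σ : ℕ → ℕ, StrictMono σ ∧ ∃ Z : ι → α → ℝ, ∀ i, Measurable (Z i) ∧
      WeakTendsto μ (fun k x => min (f (σ k) x) (L i)) (Z i) := by
  have : Fact ((2 : ℝ≥0∞) ≠ ∞) := ⟨ENNReal.ofNat_ne_top⟩
  have hsq : ∀ i n x, (min (f n x) (L i) - 1) ^ 2 ≤ (√(L i) + 1) ^ 2 * klFun (f n x) :=
    fun i n x => (sq_sub_one_le_mul_klFun (le_min (hf0 n x) (zero_le_one.trans (hL i)))
      (min_le_right _ _)).trans <| by gcongr; exact klFun_min_le (hf0 n x) (hL i)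
  have hmeas : ∀ i n, Measurable fun x => min (f n x) (L i) - 1 := fun i n =>
    ((hf n).min measurable_const).sub_const 1
  have hint : ∀ i n, Integrable (fun x => (min (f n x) (L i) - 1) ^ 2) μ := fun i n =>
    ((integrable_klFun_comp (hf n) (hf0 n) (hcost n)).const_mul _).mono'
      ((hmeas i n).pow_const 2).aestronglyMeasurable
      (.of_forall fun x => (norm_of_nonneg (sq_nonneg _)).trans_le (hsq i n x))
  have hmem : ∀ i n, MemLp (fun x => min (f n x) (L i) - 1) 2 μ := fun i n =>
    (memLp_two_iff_integrable_sq (hmeas i n).aestronglyMeasurable).mpr (hint i n)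
  have hnorm : ∀ i n, ‖(hmem i n).toLp‖ ≤ √((√(L i) + 1) ^ 2 * N) := by
    intro i n
    rw [le_sqrt (norm_nonneg _) (by positivity), ← real_inner_self_eq_norm_sq, L2.inner_def]
    calc _ = ∫ x, (min (f n x) (L i) - 1) ^ 2 ∂μ := integral_congr_ae <| by
          filter_upwards [(hmem i n).coeFn_toLp] with x hx
          simp [hx, sq]
      _ ≤ ∫ x, (√(L i) + 1) ^ 2 * klFun (f n x) ∂μ :=
          integral_mono (hint i n)
            ((integrable_klFun_comp (hf n) (hf0 n) (hcost n)).const_mul _) (hsq i n)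
      _ ≤ _ := by
          rw [integral_const_mul]
          exact mul_le_mul_of_nonneg_left (integral_klFun_comp_le (hf n) (hf0 n) (hcost n))
            (sq_nonneg _)
  obtain ⟨σ, hσ, y, hy⟩ := exists_subseq_forall_tendsto_inner _ _ hnorm
  refine ⟨σ, hσ, fun i x => y i x + 1, fun i => ⟨(Lp.stronglyMeasurable _).measurable.add_const 1,
    weakTendsto_of_tendsto_inner (fun k => (hmem i (σ k)).coeFn_toLp.symm)
      (.of_forall fun x => add_sub_cancel_right _ _) (hy i)⟩⟩

theorem exists_subseq_weakTendsto_of_lintegral_klFun_le [SigmaFinite μ] [IsSeparable μ]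
    {f : ℕ → α → ℝ} (hf : ∀ n, Measurable (f n)) (hf0 : ∀ n x, 0 ≤ f n x) {N : ℝ≥0}
    (hcost : ∀ n, ∫⁻ x, ENNReal.ofReal (klFun (f n x)) ∂μ ≤ N) :
    ∃ σ : ℕ → ℕ, StrictMono σ ∧ ∃ g : α → ℝ, Measurable g ∧ (∀ x, 0 ≤ g x) ∧
      ∫⁻ x, ENNReal.ofReal (klFun (g x)) ∂μ ≤ N ∧ WeakTendsto μ (fun k => f (σ k)) g := by
  set L : ℕ → ℝ := fun M => M + 1
  have hL1 : ∀ M, 1 ≤ L M := fun M => le_add_of_nonneg_left M.cast_nonneg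
  obtain ⟨σ, hσ, Z, hZ⟩ := exists_subseq_weakTendsto_min hf hf0 hcost L hL1
  have hZ0 : ∀ M, 0 ≤ᵐ[μ] Z M := fun M =>
    (weakTendsto_const 0).ae_le (hZ M).2 fun k x => le_min (hf0 _ x) (zero_le_one.trans (hL1 M))
  have hZL : ∀ M, ∀ᵐ x ∂μ, Z M x ≤ L M := fun M =>
    (hZ M).2.ae_le (weakTendsto_const (L M)) fun k x => min_le_right _ _
  have hmono : ∀ᵐ x ∂μ, Monotone fun M => Z M x := by
    have hstep : ∀ M, Z M ≤ᵐ[μ] Z (M + 1) := fun M =>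
      (hZ M).2.ae_le (hZ (M + 1)).2 fun k x => min_le_min_left _ (by simp [L])
    filter_upwards [ae_all_iff.mpr hstep] with x hx using monotone_nat_of_le_succ hx
  have hZcost : ∀ M, ∫⁻ x, ENNReal.ofReal (klFun (Z M x)) ∂μ ≤ N := fun M =>
    (hZ M).2.lintegral_klFun_le (fun k => (hf _).min measurable_const)
      (fun k x => le_min (hf0 _ x) (zero_le_one.trans (hL1 M)))
      (fun k => (lintegral_mono fun x => ENNReal.ofReal_le_ofReal
        (klFun_min_le (hf0 _ x) (hL1 M))).trans (hcost _))
      (hZ M).1 (hZ0 M) (hZL M) (hL1 M)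
  set g : α → ℝ := fun x => (⨆ M, ENNReal.ofReal (Z M x)).toReal
  have hlim : ∀ᵐ x ∂μ, Tendsto (fun M => Z M x) atTop (𝓝 (g x)) := by
    filter_upwards [ae_iSup_ofReal_ne_top (fun M => (hZ M).1) hZ0 hmono ENNReal.coe_ne_top hZcost,
      ae_all_iff.mpr hZ0, hmono] with x hfin h0 hx using tendsto_toReal_iSup_ofReal hx h0 hfin
  have hZle : ∀ M, ∀ᵐ x ∂μ, |Z M x| ≤ g x := fun M => by
    filter_upwards [hlim, hmono, ae_all_iff.mpr hZ0] with x hx hm h0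
    rw [abs_of_nonneg (h0 M)]
    exact hm.ge_of_tendsto hx M
  have hg : Measurable g := (Measurable.iSup fun M => (hZ M).1.ennreal_ofReal).ennreal_toReal
  have hgcost := lintegral_klFun_le_of_tendsto (fun M => (hZ M).1) hlim hZcost
  exact ⟨σ, hσ, g, hg, fun x => ENNReal.toReal_nonneg, hgcost,
    .of_min (fun k => hf _) (fun k => hf0 _) (fun k => hcost _) hg (fun x => ENNReal.toReal_nonneg)
      hgcost (tendsto_atTop_add_const_right _ 1 tendsto_natCast_atTop_atTop)
      (fun M => (hZ M).2) hlim hZle⟩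

end WeakLimits

lemma costLT_eq_lintegral_klFun {X : Type*} [MeasurableSpace X] (νT : Measure (ℝ × X))
    (g : ℝ × X → ℝ) : costLT νT g = ∫⁻ p, ENNReal.ofReal (klFun (g p)) ∂νT := by
  simp only [costLT, klFun_apply]
  congr! 3
  ring

theorem SN_seq_compact_general
    {X : Type*} [TopologicalSpace X] [PolishSpace X] [LocallyCompactSpace X]
    [MeasurableSpace X] [BorelSpace X]
    (ν : Measure X) [IsFiniteMeasureOnCompacts ν]
    (T : ℝ)
    (νT : Measure (ℝ × X)) (hνT : νT = (volume.restrict (Set.Icc 0 T)).prod ν)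
    (N : ℕ) (gn : ℕ → ℝ × X → ℝ) (hgn : ∀ n, gn n ∈ SN νT N) :
    ∃ (σ : ℕ → ℕ), StrictMono σ ∧ ∃ g ∈ SN νT N,
      ∀ φ : ℝ × X → ℝ, Continuous φ → HasCompactSupport φ →
        Tendsto (fun k => ∫ p, φ p * gn (σ k) p ∂νT) atTop
          (nhds (∫ p, φ p * g p ∂νT)) := by
  have : IsFiniteMeasureOnCompacts νT := hνT ▸ inferInstance
  obtain ⟨σ, hσ, g, hg, hg0, hgcost, hconv⟩ :=
    exists_subseq_weakTendsto_of_lintegral_klFun_le (μ := νT) (N := N) (fun n => (hgn n).1)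
      (fun n => (hgn n).2.1) fun n => by simpa [← costLT_eq_lintegral_klFun] using (hgn n).2.2
  refine ⟨σ, hσ, g, ⟨hg, hg0, by simpa [costLT_eq_lintegral_klFun] using hgcost⟩, ?_⟩
  exact fun φ hφ hφc => (hconv φ (hφc.isTestFunction hφ)).2.2

/-- Sequential compactness of `S^N` in the topology of weak convergence of the
measures `g dν_T` tested against continuous compactly supported functions. -/
theorem SN_seq_compact
    {X : Type*} [TopologicalSpace X] [PolishSpace X] [LocallyCompactSpace X]
    [MeasurableSpace X] [BorelSpace X]
    (ν : Measure X) [IsFiniteMeasureOnCompacts ν]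
    (T : ℝ) (hT : 0 < T)
    (νT : Measure (ℝ × X)) (hνT : νT = (volume.restrict (Set.Icc 0 T)).prod ν)
    (N : ℕ) (gn : ℕ → ℝ × X → ℝ) (hgn : ∀ n, gn n ∈ SN νT N) :
    ∃ (σ : ℕ → ℕ), StrictMono σ ∧ ∃ g ∈ SN νT N,
      ∀ φ : ℝ × X → ℝ, Continuous φ → HasCompactSupport φ →
        Tendsto (fun k => ∫ p, φ p * gn (σ k) p ∂νT) atTop
          (nhds (∫ p, φ p * g p ∂νT)) :=
  SN_seq_compact_general ν T νT hνT N gn hgn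
end

section
/- (Weak convergence of the drift convolution) Assume ‖S(t)‖ ≤ 1 for all t ≥ 0. Let f : H → H be demicontinuous (if x_n → x strongly in H then f(x_n) → f(x) weakly in H) and satisfy ‖f(x)‖ ≤ C(1 + ‖x‖) for some C > 0 and all x ∈ H. Let X_n, X : [0,T] → H be continuous functions with sup_{0 ≤ t ≤ T} ‖X_n(t) − X(t)‖ → 0 as n → ∞. Then for every t ∈ [0,T] and every h ∈ H, ⟨∫₀ᵗ S(t−s) f(X_n(s)) ds, h⟩ → ⟨∫₀ᵗ S(t−s) f(X(s)) ds, h⟩ as n → ∞; that is, ∫₀ᵗ S(t−s) f(X_n(s)) ds converges weakly in H to ∫₀ᵗ S(t−s) f(X(s)) ds. -/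
/-!
Pairing with `h` reduces the claim to the scalar integrals `∫₀ᵗ ⟪f (Xₙ s), S(t - s)† h⟫ ds`.
Their integrands converge pointwise by demicontinuity of `f`, and are bounded uniformly in `n`
by the growth bound on `f` and the uniform bound on `Xₙ`, so dominated convergence applies.
The only delicate point is that the vector integrands are Bochner integrable at all: `f ∘ X` is
merely weakly continuous. In a separable Hilbert space that suffices for Borel measurability,
because the norm is weakly lower semicontinuous and balls generate the Borel σ-algebra.
-/

open MeasureTheory Filter RealInnerProductSpace Set Topology

section Measurability

variable {H : Type*} [NormedAddCommGroup H] [InnerProductSpace ℝ H]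

theorem lowerSemicontinuous_norm_of_continuous_inner {α : Type*} [TopologicalSpace α]
    {g : α → H} (hg : ∀ h, Continuous fun x => ⟪g x, h⟫) :
    LowerSemicontinuous fun x => ‖g x‖ := by
  intro x₀ y hy
  rcases lt_or_ge y 0 with hy0 | hy0
  · exact Eventually.of_forall fun x => hy0.trans_le (norm_nonneg _)
  -- Test against `g x₀` itself: `⟪g x, g x₀⟫ → ‖g x₀‖² > y ‖g x₀‖`.
  have hpos : 0 < ‖g x₀‖ := hy0.trans_lt hy
  have hlim : y * ‖g x₀‖ < ⟪g x₀, g x₀⟫ := by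
    rw [real_inner_self_eq_norm_mul_norm]
    exact mul_lt_mul_of_pos_right hy hpos
  filter_upwards [(hg (g x₀)).continuousAt.eventually (lt_mem_nhds hlim)] with x hx
  exact lt_of_mul_lt_mul_right (hx.trans_le (real_inner_le_norm _ _)) hpos.le

theorem measurable_of_measurable_dist {α β : Type*} [MeasurableSpace α] [PseudoMetricSpace β]
    [SecondCountableTopology β] [MeasurableSpace β] [BorelSpace β] {g : α → β}
    (hg : ∀ c, Measurable fun x => dist (g x) c) : Measurable g := by
  have hbasis : TopologicalSpace.IsTopologicalBasis {B : Set β | ∃ c r, B = Metric.ball c r} :=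
    TopologicalSpace.isTopologicalBasis_of_isOpen_of_nhds
      (by rintro _ ⟨c, r, rfl⟩; exact Metric.isOpen_ball)
      fun x u hx hu => by
        obtain ⟨ε, hε, hsub⟩ := Metric.isOpen_iff.1 hu x hx
        exact ⟨Metric.ball x ε, ⟨x, ε, rfl⟩, Metric.mem_ball_self hε, hsub⟩
  rw [‹BorelSpace β›.measurable_eq, hbasis.borel_eq_generateFrom]
  refine measurable_generateFrom ?_
  rintro _ ⟨c, r, rfl⟩
  exact hg c measurableSet_Iio

theorem measurable_of_continuous_inner [SecondCountableTopology H] [MeasurableSpace H]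
    [BorelSpace H] {α : Type*} [TopologicalSpace α] [MeasurableSpace α] [OpensMeasurableSpace α]
    {g : α → H} (hg : ∀ h, Continuous fun x => ⟪g x, h⟫) : Measurable g := by
  refine measurable_of_measurable_dist fun c => ?_
  simp only [dist_eq_norm]
  refine (lowerSemicontinuous_norm_of_continuous_inner fun h => ?_).measurable
  simp only [inner_sub_left]
  exact (hg h).sub continuous_const

theorem aestronglyMeasurable_of_continuousOn_inner [SecondCountableTopology H] {μ : Measure ℝ}
    {g : ℝ → H} {a b : ℝ} (hab : a ≤ b) (hg : ∀ h, ContinuousOn (fun s => ⟪g s, h⟫) (Icc a b)) :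
    AEStronglyMeasurable g (μ.restrict (Icc a b)) := by
  borelize H
  have hext : Measurable (IccExtend hab ((Icc a b).domRestrict g)) :=
    measurable_of_continuous_inner fun h => (hg h).domRestrict.comp continuous_projIcc
  refine hext.aestronglyMeasurable.congr ?_
  exact ae_restrict_of_forall_mem measurableSet_Icc fun s hs => IccExtend_of_mem hab _ hs

end Measurability

theorem continuous_apply_of_norm_le {X E F : Type*} [TopologicalSpace X]
    [SeminormedAddCommGroup E] [NormedSpace ℝ E] [SeminormedAddCommGroup F] [NormedSpace ℝ F]
    {S : X → E →L[ℝ] F} {M : ℝ} (hS : ∀ y, Continuous fun x => S x y) (hM : ∀ x, ‖S x‖ ≤ M) :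
    Continuous fun p : X × E => S p.1 p.2 := by
  rw [continuous_iff_continuousAt]
  rintro ⟨x₀, y₀⟩
  rw [ContinuousAt, tendsto_iff_norm_sub_tendsto_zero]
  have hbound : Continuous fun p : X × E => M * ‖p.2 - y₀‖ + ‖S p.1 y₀ - S x₀ y₀‖ := by
    have := hS y₀
    fun_prop
  refine squeeze_zero (fun _ => norm_nonneg _) (fun p => ?_)
    (by simpa using hbound.tendsto (x₀, y₀))
  calc ‖S p.1 p.2 - S x₀ y₀‖ = ‖S p.1 (p.2 - y₀) + (S p.1 y₀ - S x₀ y₀)‖ := by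
        rw [map_sub]; abel_nf
    _ ≤ M * ‖p.2 - y₀‖ + ‖S p.1 y₀ - S x₀ y₀‖ :=
        (norm_add_le _ _).trans (add_le_add_left ((S p.1).le_of_opNorm_le (hM p.1) _) _)

theorem integrableOn_Icc_apply_sub {H F : Type*} [NormedAddCommGroup H] [InnerProductSpace ℝ H]
    [SecondCountableTopology H] [NormedAddCommGroup F] [NormedSpace ℝ F]
    {S : ℝ → H →L[ℝ] F} {M : ℝ} (hScont : ∀ x, ContinuousOn (fun t => S t x) (Ici 0))
    (hSbdd : ∀ t, 0 ≤ t → ‖S t‖ ≤ M) {g : ℝ → H} {t K : ℝ} (ht : 0 ≤ t)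
    (hg : ∀ h, ContinuousOn (fun s => ⟪g s, h⟫) (Icc 0 t)) (hgK : ∀ s ∈ Icc 0 t, ‖g s‖ ≤ K) :
    IntegrableOn (fun s => S (t - s) (g s)) (Icc 0 t) := by
  have hM : 0 ≤ M := (norm_nonneg _).trans (hSbdd 0 le_rfl)
  -- `max r 0` extends `S` to a strongly continuous family on all of `ℝ`.
  have hΦ : Continuous fun p : ℝ × H => S (max p.1 0) p.2 :=
    continuous_apply_of_norm_le
      (fun x => (hScont x).comp_continuous (continuous_id.max continuous_const)
        fun r => le_max_right r 0)
      fun r => hSbdd _ (le_max_right r 0)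
  have hmeas : AEStronglyMeasurable (fun s => S (t - s) (g s)) (volume.restrict (Icc 0 t)) := by
    refine (hΦ.comp_aestronglyMeasurable ((continuous_sub_left t).aestronglyMeasurable.prodMk
      (aestronglyMeasurable_of_continuousOn_inner ht hg))).congr ?_
    refine ae_restrict_of_forall_mem measurableSet_Icc fun s hs => ?_
    simp only [max_eq_left (sub_nonneg.2 hs.2)]
  refine Integrable.of_bound hmeas (M * K) ?_
  refine ae_restrict_of_forall_mem measurableSet_Icc fun s hs => ?_
  exact ((S _).le_of_opNorm_le (hSbdd _ (sub_nonneg.2 hs.2)) _).trans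
    (mul_le_mul_of_nonneg_left (hgK s hs) hM)

section UniformConvergence

variable {ι X E : Type*} [SeminormedAddCommGroup E]

theorem tendstoUniformlyOn_of_tendsto_iSup_norm_sub [TopologicalSpace X] {l : Filter ι}
    {F : ι → X → E} {f : X → E} {K : Set X} (hK : IsCompact K) (hF : ∀ n, ContinuousOn (F n) K)
    (hf : ContinuousOn f K)
    (h : Tendsto (fun n => ⨆ x : K, ‖F n x - f x‖) l (𝓝 0)) : TendstoUniformlyOn F f l K := by
  refine Metric.tendstoUniformlyOn_iff.2 fun ε hε => ?_
  filter_upwards [h.eventually (gt_mem_nhds hε)] with n hn x hx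
  -- Without continuity the supremum could be unbounded, and then it would be `0`.
  have hbdd : BddAbove (range fun y : K => ‖F n y - f y‖) := by
    simpa only [image_eq_range, Pi.sub_apply] using hK.bddAbove_image ((hF n).sub hf).norm
  rw [dist_comm, dist_eq_norm]
  exact (le_ciSup hbdd ⟨x, hx⟩).trans_lt hn

theorem TendstoUniformlyOn.eventually_forall_norm_le {l : Filter ι} {F : ι → X → E} {f : X → E}
    {K : Set X} (h : TendstoUniformlyOn F f l K) {R : ℝ} (hR : ∀ x ∈ K, ‖f x‖ ≤ R) :
    ∀ᶠ n in l, ∀ x ∈ K, ‖F n x‖ ≤ R + 1 := by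
  filter_upwards [Metric.tendstoUniformlyOn_iff.1 h 1 one_pos] with n hn x hx
  calc ‖F n x‖ ≤ ‖f x‖ + ‖F n x - f x‖ := norm_le_insert' _ _
    _ ≤ R + 1 := add_le_add (hR x hx) (by rw [← dist_eq_norm, dist_comm]; exact (hn x hx).le)

end UniformConvergence

theorem tendsto_inner_integral_of_dominated_convergence {H α ι : Type*} [NormedAddCommGroup H]
    [InnerProductSpace ℝ H] [CompleteSpace H] [MeasurableSpace α] {μ : Measure α} {l : Filter ι}
    [l.IsCountablyGenerated] {F : ι → α → H} {G : α → H} (bound : α → ℝ)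
    (hF : ∀ n, Integrable (F n) μ) (hG : Integrable G μ) (hbound : Integrable bound μ)
    (hFbound : ∀ᶠ n in l, ∀ᵐ x ∂μ, ‖F n x‖ ≤ bound x) (h : H)
    (hlim : ∀ᵐ x ∂μ, Tendsto (fun n => ⟪F n x, h⟫) l (𝓝 ⟪G x, h⟫)) :
    Tendsto (fun n => ⟪∫ x, F n x ∂μ, h⟫) l (𝓝 ⟪∫ x, G x ∂μ, h⟫) := by
  have hcomm : ∀ φ : α → H, Integrable φ μ → ⟪∫ x, φ x ∂μ, h⟫ = ∫ x, ⟪φ x, h⟫ ∂μ := by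
    intro φ hφ
    simpa only [real_inner_comm h] using (integral_inner hφ h).symm
  simp only [hcomm _ (hF _), hcomm _ hG]
  refine tendsto_integral_filter_of_dominated_convergence (fun x => bound x * ‖h‖)
    (Eventually.of_forall fun n => (hF n).aestronglyMeasurable.inner_const) ?_
    (hbound.mul_const _) hlim
  filter_upwards [hFbound] with n hn
  filter_upwards [hn] with x hx
  exact (norm_inner_le_norm _ _).trans (mul_le_mul_of_nonneg_right hx (norm_nonneg h))

theorem drift_convolution_weak_tendsto_general
    {H : Type*} [NormedAddCommGroup H] [InnerProductSpace ℝ H] [CompleteSpace H]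
    [SecondCountableTopology H]
    (S : ℝ → H →L[ℝ] H)
    (hScont : ∀ x : H, ContinuousOn (fun t => S t x) (Set.Ici 0))
    (hScontr : ∀ t : ℝ, 0 ≤ t → ‖S t‖ ≤ 1)
    (T : ℝ)
    (f : H → H) (C : ℝ)
    (hfdemi : ∀ (x : ℕ → H) (x₀ : H), Tendsto x atTop (nhds x₀) →
      ∀ h : H, Tendsto (fun n => ⟪f (x n), h⟫) atTop (nhds ⟪f x₀, h⟫))
    (hfgrowth : ∀ x : H, ‖f x‖ ≤ C * (1 + ‖x‖))
    (Xn : ℕ → ℝ → H) (Xg : ℝ → H)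
    (hXncont : ∀ n, ContinuousOn (Xn n) (Set.Icc 0 T))
    (hXgcont : ContinuousOn Xg (Set.Icc 0 T))
    (hunif : Tendsto (fun n => ⨆ t : Set.Icc (0 : ℝ) T, ‖Xn n t - Xg t‖) atTop (nhds 0)) :
    ∀ t ∈ Set.Icc (0 : ℝ) T, ∀ h : H,
      Tendsto (fun n => ⟪∫ s in (0:ℝ)..t, S (t - s) (f (Xn n s)), h⟫) atTop
        (nhds ⟪∫ s in (0:ℝ)..t, S (t - s) (f (Xg s)), h⟫) := by
  rintro t ⟨ht0, htT⟩ h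
  have hsub : Icc 0 t ⊆ Icc 0 T := Icc_subset_Icc_right htT
  have hC : 0 ≤ C := by simpa using (norm_nonneg _).trans (hfgrowth 0)
  have hf : ∀ v, Continuous fun x => ⟪f x, v⟫ := fun v =>
    continuous_iff_seqContinuous.2 fun _ _ hx => hfdemi _ _ hx v
  have hint : ∀ Y : ℝ → H, ContinuousOn Y (Icc 0 T) →
      IntegrableOn (fun s => S (t - s) (f (Y s))) (Ioc 0 t) := by
    intro Y hY
    obtain ⟨M, hM⟩ := isCompact_Icc.exists_bound_of_continuousOn hY
    refine (integrableOn_Icc_apply_sub (K := C * (1 + M)) hScont hScontr ht0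
      (fun v => (hf v).comp_continuousOn (hY.mono hsub))
      fun s hs => (hfgrowth _).trans ?_).mono_set Ioc_subset_Icc_self
    gcongr
    exact hM s (hsub hs)
  have hXconv := tendstoUniformlyOn_of_tendsto_iSup_norm_sub isCompact_Icc hXncont hXgcont hunif
  obtain ⟨R, hR⟩ := isCompact_Icc.exists_bound_of_continuousOn hXgcont
  simp only [intervalIntegral.integral_of_le ht0]
  refine tendsto_inner_integral_of_dominated_convergence (fun _ => 1 * (C * (1 + (R + 1))))
    (fun n => hint _ (hXncont n)) (hint _ hXgcont) (integrable_const _) ?_ h ?_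
  · filter_upwards [hXconv.eventually_forall_norm_le hR] with n hn
    refine ae_restrict_of_forall_mem measurableSet_Ioc fun s hs => ?_
    refine ((S _).le_of_opNorm_le (hScontr _ (sub_nonneg.2 hs.2)) _).trans ?_
    gcongr
    exact (hfgrowth _).trans (by gcongr; exact hn s (hsub (Ioc_subset_Icc_self hs)))
  · refine ae_restrict_of_forall_mem measurableSet_Ioc fun s hs => ?_
    simp only [← ContinuousLinearMap.adjoint_inner_right]
    exact ((hf _).tendsto _).comp (hXconv.tendsto_at (hsub (Ioc_subset_Icc_self hs)))

/-- Weak convergence of the drift convolution: if `X_n → X` uniformly on `[0,T]`, then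
`∫₀ᵗ S(t−s) f(X_n(s)) ds` converges weakly in `H` to `∫₀ᵗ S(t−s) f(X(s)) ds`. -/
theorem drift_convolution_weak_tendsto
    {H : Type*} [NormedAddCommGroup H] [InnerProductSpace ℝ H] [CompleteSpace H]
    [SecondCountableTopology H]
    (S : ℝ → H →L[ℝ] H)
    (hS0 : S 0 = ContinuousLinearMap.id ℝ H)
    (hSadd : ∀ s t : ℝ, 0 ≤ s → 0 ≤ t → S (t + s) = (S t).comp (S s))
    (hScont : ∀ x : H, ContinuousOn (fun t => S t x) (Set.Ici 0))
    (hScontr : ∀ t : ℝ, 0 ≤ t → ‖S t‖ ≤ 1)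
    (T : ℝ) (hT : 0 < T)
    (f : H → H) (C : ℝ) (hC : 0 < C)
    (hfdemi : ∀ (x : ℕ → H) (x₀ : H), Tendsto x atTop (nhds x₀) →
      ∀ h : H, Tendsto (fun n => ⟪f (x n), h⟫) atTop (nhds ⟪f x₀, h⟫))
    (hfgrowth : ∀ x : H, ‖f x‖ ≤ C * (1 + ‖x‖))
    (Xn : ℕ → ℝ → H) (Xg : ℝ → H)
    (hXncont : ∀ n, ContinuousOn (Xn n) (Set.Icc 0 T))
    (hXgcont : ContinuousOn Xg (Set.Icc 0 T))
    (hunif : Tendsto (fun n => ⨆ t : Set.Icc (0 : ℝ) T, ‖Xn n t - Xg t‖) atTop (nhds 0)) :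
    ∀ t ∈ Set.Icc (0 : ℝ) T, ∀ h : H,
      Tendsto (fun n => ⟪∫ s in (0:ℝ)..t, S (t - s) (f (Xn n s)), h⟫) atTop
        (nhds ⟪∫ s in (0:ℝ)..t, S (t - s) (f (Xg s)), h⟫) :=
  drift_convolution_weak_tendsto_general S hScont hScontr T f C hfdemi hfgrowth Xn Xg hXncont
    hXgcont hunif
end

section
/- (Stability estimate for the controlled diffusion convolution) Assume ‖S(t)‖ ≤ 1 for all t ≥ 0, and let G satisfy the coefficient hypotheses. Let Y, Z : [0,T] → H be continuous and let g₁, g₂ : X_T → [0,∞) be measurable functions for which the integrals below are finite. Then for every t ∈ [0,T]: ‖∫₀ᵗ S(t−s) ∫_X [G(s, Y_s, v)(g₁(s,v) − 1) − G(s, Z_s, v)(g₂(s,v) − 1)] ν(dv) ds‖ ≤ (sup_{0 ≤ s ≤ T} ‖Y_s − Z_s‖) ∫_{X_T} ‖G(s,v)‖₁ |g₁(s,v) − 1| ν(dv) ds + (1 + sup_{0 ≤ s ≤ T} ‖Z_s‖) ∫_{X_T} ‖G(s,v)‖₀ |g₁(s,v) − g₂(s,v)| ν(dv) ds. -/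
open MeasureTheory Filter

/-!
Since `S` is a contraction, the norm of the convolution is at most the time integral of the norm
of the inner integral. At each time, `(g₁ - 1) • G(Y) - (g₂ - 1) • G(Z)` equals
`(g₁ - 1) • (G(Y) - G(Z)) + (g₁ - g₂) • G(Z)`, so the Lipschitz and linear growth bounds on `G`
dominate it by `‖G‖₁ |g₁ - 1| ‖Y - Z‖ + ‖G‖₀ |g₁ - g₂| (1 + ‖Z‖)`. Bounding `‖Y - Z‖` and `‖Z‖` by
their suprema over the compact interval `[0, T]` and enlarging the time integral from `[0, t]` to
`[0, T]` (Fubini) gives the estimate.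
-/

lemma le_iSup_of_continuousOn_isCompact {α : Type*} [TopologicalSpace α] {K : Set α}
    (hK : IsCompact K) {f : α → ℝ} (hf : ContinuousOn f K) {x : α} (hx : x ∈ K) :
    f x ≤ ⨆ y : K, f y :=
  le_ciSup (by simpa only [Set.image_eq_range] using hK.bddAbove_image hf) (⟨x, hx⟩ : K)

lemma norm_smul_sub_smul_le {𝕜 E : Type*} [NormedField 𝕜] [SeminormedAddCommGroup E]
    [NormedSpace 𝕜 E] (a b : 𝕜) (u w : E) :
    ‖a • u - b • w‖ ≤ ‖a‖ * ‖u - w‖ + ‖a - b‖ * ‖w‖ :=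
  calc ‖a • u - b • w‖ = ‖a • (u - w) + (a - b) • w‖ := by
        rw [smul_sub, sub_smul]; abel_nf
    _ ≤ ‖a‖ * ‖u - w‖ + ‖a - b‖ * ‖w‖ := by
        simpa only [norm_smul] using norm_add_le (a • (u - w)) ((a - b) • w)

section

variable {E X : Type*} [NormedAddCommGroup E] [NormedSpace ℝ E] [MeasurableSpace X]
  {ν : Measure X}

lemma norm_integral_control_smul_sub_le {Γ : E → X → E} {L K a b : X → ℝ} {y z : E} {δ c : ℝ}
    (hL₀ : ∀ v, 0 ≤ L v) (hK₀ : ∀ v, 0 ≤ K v)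
    (hL : ∀ v, ‖Γ y v - Γ z v‖ ≤ L v * ‖y - z‖) (hK : ∀ v, ‖Γ z v‖ ≤ K v * (1 + ‖z‖))
    (hδ : ‖y - z‖ ≤ δ) (hc : ‖z‖ ≤ c)
    (hy : Integrable (fun v => (a v - 1) • Γ y v) ν)
    (hz : Integrable (fun v => (b v - 1) • Γ z v) ν)
    (hLa : Integrable (fun v => L v * |a v - 1|) ν)
    (hKab : Integrable (fun v => K v * |a v - b v|) ν) :
    ‖(∫ v, (a v - 1) • Γ y v ∂ν) - ∫ v, (b v - 1) • Γ z v ∂ν‖ ≤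
      δ * (∫ v, L v * |a v - 1| ∂ν) + (1 + c) * ∫ v, K v * |a v - b v| ∂ν := by
  rw [← integral_sub hy hz, ← integral_const_mul, ← integral_const_mul,
    ← integral_add (hLa.const_mul _) (hKab.const_mul _)]
  refine norm_integral_le_of_norm_le ((hLa.const_mul _).add (hKab.const_mul _))
    (Eventually.of_forall fun v => ?_)
  calc ‖(a v - 1) • Γ y v - (b v - 1) • Γ z v‖
      ≤ |a v - 1| * ‖Γ y v - Γ z v‖ + |a v - b v| * ‖Γ z v‖ := by
        simpa only [Real.norm_eq_abs, sub_sub_sub_cancel_right] using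
          norm_smul_sub_smul_le (a v - 1) (b v - 1) (Γ y v) (Γ z v)
    _ ≤ |a v - 1| * (L v * δ) + |a v - b v| * (K v * (1 + c)) := by
        gcongr
        exacts [(hL v).trans (by gcongr; exact hL₀ v), (hK v).trans (by gcongr; exact hK₀ v)]
    _ = _ := by ring

lemma intervalIntegral_integral_le_integral_prod [SFinite ν] {F : ℝ × X → ℝ}
    (hF : ∀ p, 0 ≤ F p) {T t : ℝ} (ht : t ∈ Set.Icc 0 T)
    (hint : Integrable F ((volume.restrict (Set.Icc 0 T)).prod ν)) :
    IntervalIntegrable (fun s => ∫ v, F (s, v) ∂ν) volume 0 t ∧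
      ∫ s in (0 : ℝ)..t, ∫ v, F (s, v) ∂ν ≤
        ∫ p, F p ∂(volume.restrict (Set.Icc 0 T)).prod ν := by
  have hsub : Set.Ioc 0 t ⊆ Set.Icc 0 T := fun s hs => ⟨hs.1.le, hs.2.trans ht.2⟩
  have hslice := hint.integral_prod_left
  refine ⟨(intervalIntegrable_iff_integrableOn_Ioc_of_le ht.1).2 ?_, ?_⟩
  · simpa only [IntegrableOn, Measure.restrict_restrict_of_subset hsub] using
      hslice.restrict (s := Set.Ioc 0 t)
  · rw [intervalIntegral.integral_of_le ht.1, integral_prod F hint,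
      ← Measure.restrict_restrict_of_subset hsub]
    exact setIntegral_le_integral hslice
      (Eventually.of_forall fun s => integral_nonneg fun v => hF (s, v))

end

theorem controlled_diffusion_convolution_stability_general
    {H : Type*} [NormedAddCommGroup H] [InnerProductSpace ℝ H]
    {X : Type*} [TopologicalSpace X] [PolishSpace X] [LocallyCompactSpace X]
    [MeasurableSpace X]
    (ν : Measure X) [IsFiniteMeasureOnCompacts ν]
    (T : ℝ)
    (νT : Measure (ℝ × X)) (hνT : νT = (volume.restrict (Set.Icc 0 T)).prod ν)
    -- the `C₀`-semigroup, a contraction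
    (S : ℝ → H →L[ℝ] H)
    (hScontr : ∀ t : ℝ, 0 ≤ t → ‖S t‖ ≤ 1)
    -- the diffusion coefficient `G` and the norms `‖G(t,v)‖₀`, `‖G(t,v)‖₁`
    (G : ℝ → H → X → H)
    (G0 G1 : ℝ × X → ℝ)
    (hG0nonneg : ∀ p, 0 ≤ G0 p) (hG1nonneg : ∀ p, 0 ≤ G1 p)
    (hG0dom : ∀ (t : ℝ) (x : H) (v : X), ‖G t x v‖ ≤ G0 (t, v) * (1 + ‖x‖))
    (hG1dom : ∀ (t : ℝ) (x y : H) (v : X), ‖G t x v - G t y v‖ ≤ G1 (t, v) * ‖x - y‖)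
    -- the paths and the controls
    (Y Z : ℝ → H)
    (hYcont : ContinuousOn Y (Set.Icc 0 T)) (hZcont : ContinuousOn Z (Set.Icc 0 T))
    (g₁ g₂ : ℝ × X → ℝ)
    -- finiteness of the integrals involved
    (hInt1 : Integrable (fun p : ℝ × X => G1 p * |g₁ p - 1|) νT)
    (hInt2 : Integrable (fun p : ℝ × X => G0 p * |g₁ p - g₂ p|) νT)
    (hIntY : ∀ s ∈ Set.Icc (0 : ℝ) T, Integrable (fun v => (g₁ (s, v) - 1) • G s (Y s) v) ν)
    (hIntZ : ∀ s ∈ Set.Icc (0 : ℝ) T, Integrable (fun v => (g₂ (s, v) - 1) • G s (Z s) v) ν) :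
    ∀ t ∈ Set.Icc (0 : ℝ) T,
      ‖∫ s in (0:ℝ)..t, S (t - s) ((∫ v, (g₁ (s, v) - 1) • G s (Y s) v ∂ν) -
          ∫ v, (g₂ (s, v) - 1) • G s (Z s) v ∂ν)‖ ≤
        (⨆ s : Set.Icc (0 : ℝ) T, ‖Y s - Z s‖) * (∫ p, G1 p * |g₁ p - 1| ∂νT) +
        (1 + ⨆ s : Set.Icc (0 : ℝ) T, ‖Z s‖) * ∫ p, G0 p * |g₁ p - g₂ p| ∂νT := by
  intro t ht
  subst hνT
  set M₁ := ⨆ s : Set.Icc (0 : ℝ) T, ‖Y s - Z s‖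
  set M₀ := ⨆ s : Set.Icc (0 : ℝ) T, ‖Z s‖
  have hM₁ : 0 ≤ M₁ := Real.iSup_nonneg fun _ => norm_nonneg _
  have hM₀ : 0 ≤ M₀ := Real.iSup_nonneg fun _ => norm_nonneg _
  obtain ⟨hint₁, hle₁⟩ := intervalIntegral_integral_le_integral_prod
    (fun p => mul_nonneg (hG1nonneg p) (abs_nonneg _)) ht hInt1
  obtain ⟨hint₀, hle₀⟩ := intervalIntegral_integral_le_integral_prod
    (fun p => mul_nonneg (hG0nonneg p) (abs_nonneg _)) ht hInt2
  refine (intervalIntegral.norm_integral_le_of_norm_le ht.1 ?_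
    ((hint₁.const_mul M₁).add (hint₀.const_mul (1 + M₀)))).trans ?_
  · filter_upwards [(ae_restrict_iff' measurableSet_Icc).1 hInt1.prod_right_ae,
      (ae_restrict_iff' measurableSet_Icc).1 hInt2.prod_right_ae] with s hs₁ hs₀ hs
    have hsT : s ∈ Set.Icc 0 T := ⟨hs.1.le, hs.2.trans ht.2⟩
    refine (((S (t - s)).le_of_opNorm_le (hScontr _ (sub_nonneg.2 hs.2)) _).trans_eq
      (one_mul _)).trans ?_
    exact norm_integral_control_smul_sub_le (fun _ => hG1nonneg _) (fun _ => hG0nonneg _)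
      (hG1dom s _ _) (hG0dom s _)
      (le_iSup_of_continuousOn_isCompact isCompact_Icc (hYcont.sub hZcont).norm hsT)
      (le_iSup_of_continuousOn_isCompact isCompact_Icc hZcont.norm hsT)
      (hIntY s hsT) (hIntZ s hsT) (hs₁ hsT) (hs₀ hsT)
  · rw [intervalIntegral.integral_add (hint₁.const_mul M₁) (hint₀.const_mul (1 + M₀)),
      intervalIntegral.integral_const_mul, intervalIntegral.integral_const_mul]
    gcongr

/-- Stability estimate for the controlled diffusion convolution. -/
theorem controlled_diffusion_convolution_stability
    {H : Type*} [NormedAddCommGroup H] [InnerProductSpace ℝ H] [CompleteSpace H]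
    [SecondCountableTopology H] [MeasurableSpace H] [BorelSpace H]
    {X : Type*} [TopologicalSpace X] [PolishSpace X] [LocallyCompactSpace X]
    [MeasurableSpace X] [BorelSpace X]
    (ν : Measure X) [IsFiniteMeasureOnCompacts ν]
    (T : ℝ) (hT : 0 < T)
    (νT : Measure (ℝ × X)) (hνT : νT = (volume.restrict (Set.Icc 0 T)).prod ν)
    -- the `C₀`-semigroup, a contraction
    (S : ℝ → H →L[ℝ] H)
    (hS0 : S 0 = ContinuousLinearMap.id ℝ H)
    (hSadd : ∀ s t : ℝ, 0 ≤ s → 0 ≤ t → S (t + s) = (S t).comp (S s))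
    (hScont : ∀ x : H, ContinuousOn (fun t => S t x) (Set.Ici 0))
    (hScontr : ∀ t : ℝ, 0 ≤ t → ‖S t‖ ≤ 1)
    -- the diffusion coefficient `G` and the norms `‖G(t,v)‖₀`, `‖G(t,v)‖₁`
    (G : ℝ → H → X → H)
    (hGmeas : Measurable fun p : ℝ × H × X => G p.1 p.2.1 p.2.2)
    (G0 G1 : ℝ × X → ℝ)
    (hG0meas : Measurable G0) (hG1meas : Measurable G1)
    (hG0nonneg : ∀ p, 0 ≤ G0 p) (hG1nonneg : ∀ p, 0 ≤ G1 p)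
    (hG0dom : ∀ (t : ℝ) (x : H) (v : X), ‖G t x v‖ ≤ G0 (t, v) * (1 + ‖x‖))
    (hG1dom : ∀ (t : ℝ) (x y : H) (v : X), ‖G t x v - G t y v‖ ≤ G1 (t, v) * ‖x - y‖)
    -- the paths and the controls
    (Y Z : ℝ → H)
    (hYcont : ContinuousOn Y (Set.Icc 0 T)) (hZcont : ContinuousOn Z (Set.Icc 0 T))
    (g₁ g₂ : ℝ × X → ℝ)
    (hg₁meas : Measurable g₁) (hg₂meas : Measurable g₂)
    (hg₁nonneg : ∀ p, 0 ≤ g₁ p) (hg₂nonneg : ∀ p, 0 ≤ g₂ p)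
    -- finiteness of the integrals involved
    (hInt1 : Integrable (fun p : ℝ × X => G1 p * |g₁ p - 1|) νT)
    (hInt2 : Integrable (fun p : ℝ × X => G0 p * |g₁ p - g₂ p|) νT)
    (hIntY : ∀ s ∈ Set.Icc (0 : ℝ) T, Integrable (fun v => (g₁ (s, v) - 1) • G s (Y s) v) ν)
    (hIntZ : ∀ s ∈ Set.Icc (0 : ℝ) T, Integrable (fun v => (g₂ (s, v) - 1) • G s (Z s) v) ν)
    (hOuter : ∀ t ∈ Set.Icc (0 : ℝ) T, IntervalIntegrable
      (fun s => S (t - s) ((∫ v, (g₁ (s, v) - 1) • G s (Y s) v ∂ν) -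
        ∫ v, (g₂ (s, v) - 1) • G s (Z s) v ∂ν)) volume 0 t) :
    ∀ t ∈ Set.Icc (0 : ℝ) T,
      ‖∫ s in (0:ℝ)..t, S (t - s) ((∫ v, (g₁ (s, v) - 1) • G s (Y s) v ∂ν) -
          ∫ v, (g₂ (s, v) - 1) • G s (Z s) v ∂ν)‖ ≤
        (⨆ s : Set.Icc (0 : ℝ) T, ‖Y s - Z s‖) * (∫ p, G1 p * |g₁ p - 1| ∂νT) +
        (1 + ⨆ s : Set.Icc (0 : ℝ) T, ‖Z s‖) * ∫ p, G0 p * |g₁ p - g₂ p| ∂νT :=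
  controlled_diffusion_convolution_stability_general ν T νT hνT S hScontr G G0 G1 hG0nonneg
    hG1nonneg hG0dom hG1dom Y Z hYcont hZcont g₁ g₂ hInt1 hInt2 hIntY hIntZ
end
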